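/- arXiv:1212.3191 — 4 statements merged into one kernel-verified Lean document; each statement's English description precedes it below -/
import Mathlib

section
/- For nonnegative integers n, r1, r2 with r1 ≤ r2, the (r1,r2)-Bell polynomial expands in ordinary r2-Bell polynomials via signed Stirling numbers of the first kind: B_n(z; r1, r2) = Σ_{k=0}^{r1} (−1)^{r1−k} · s_abs(r1, k) · B_{n+k}(z; r2), where s_abs denotes the unsigned Stirling number of the first kind. -/
open Finset

/-- `𝒜` is a set partition of `Fin N`: blocks are nonempty and every element
lies in exactly one block. -/
def IsSetPartition {N : ℕ} (𝒜 : Finset (Finset (Fin N))) : Prop :=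
  (∀ t ∈ 𝒜, t.Nonempty) ∧ ∀ x : Fin N, ∃! t, t ∈ 𝒜 ∧ x ∈ t

/-- The elements of `S` lie in pairwise distinct blocks of `𝒜`. -/
def DistinctBlocks {N : ℕ} (𝒜 : Finset (Finset (Fin N))) (S : Set (Fin N)) : Prop :=
  ∀ a ∈ S, ∀ b ∈ S, a ≠ b → ∀ t ∈ 𝒜, ¬(a ∈ t ∧ b ∈ t)

/-- The `r`-Stirling number of the second kind `{n+r brace k+r}_r`: the number of
partitions of `{1,…,n+r}` into `k+r` nonempty blocks with `1,…,r` in distinct blocks. -/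
noncomputable def rStirling (r n k : ℕ) : ℕ :=
  Nat.card {𝒜 : Finset (Finset (Fin (n + r))) //
    IsSetPartition 𝒜 ∧ 𝒜.card = k + r ∧ DistinctBlocks 𝒜 {x | (x : ℕ) < r}}

/-- The `(r₁,r₂)`-Stirling number of the second kind `{n+r₁+r₂ brace k+r₂}_{r₁,r₂}`. -/
noncomputable def rrStirling (r₁ r₂ n k : ℕ) : ℕ :=
  Nat.card {𝒜 : Finset (Finset (Fin (n + r₁ + r₂))) //
    IsSetPartition 𝒜 ∧ 𝒜.card = k + r₂ ∧
    DistinctBlocks 𝒜 {x | (x : ℕ) < r₁} ∧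
    DistinctBlocks 𝒜 {x | r₁ ≤ (x : ℕ) ∧ (x : ℕ) < r₁ + r₂}}

/-- The `r`-Bell polynomial `B_n(z;r) = Σ_{k=0}^n {n+r brace k+r}_r z^k`. -/
noncomputable def rBell (r n : ℕ) (z : ℝ) : ℝ :=
  ∑ k ∈ range (n + 1), (rStirling r n k : ℝ) * z ^ k

/-- The `(r₁,r₂)`-Bell polynomial `B_n(z;r₁,r₂) = Σ_{k=0}^{n+r₁} {n+r₁+r₂ brace k+r₂}_{r₁,r₂} z^k`. -/
noncomputable def rrBell (r₁ r₂ n : ℕ) (z : ℝ) : ℝ :=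
  ∑ k ∈ range (n + r₁ + 1), (rrStirling r₁ r₂ n k : ℝ) * z ^ k

/-- The unsigned Stirling number of the first kind, via the standard recurrence. -/
def sabs : ℕ → ℕ → ℕ
  | 0, 0 => 1
  | 0, _ + 1 => 0
  | _ + 1, 0 => 0
  | n + 1, k + 1 => n * sabs n (k + 1) + sabs n k

/-!
Let `p = r₁ + r₂`, a point of `Fin (n + 1 + r₁ + r₂)` outside both distinguished sets. A partition
counted by `rrStirling r₁ r₂ (n + 1) k` either keeps `p` apart from `0, …, r₁ - 1`, and swapping
`p` with `r₁` turns it into one counted by `rrStirling (r₁ + 1) r₂ n k`, or it puts `p` into the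
block of one of these `r₁` points, and deleting `p` leaves one counted by `rrStirling r₁ r₂ n k`.
Hence `B_{n+1}(z; r₁, r₂) = B_n(z; r₁ + 1, r₂) + r₁ B_n(z; r₁, r₂)`, that is,
`B(r₁ + 1) = (E - r₁) B(r₁)` for the shift `E` in `n`. So `B(r₁) = E (E - 1) ⋯ (E - r₁ + 1) B(0)`
with `B(0) = B(z; r₂)`, and the coefficients of the falling factorial `x (x - 1) ⋯ (x - r₁ + 1)`
are `(-1)^(r₁-k) s_abs(r₁, k)`.
-/

section Partitions
variable {N : ℕ} {𝒜 : Finset (Finset (Fin N))}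

lemma IsSetPartition.mem_iff_mem_of_mem_of_mem (h𝒜 : IsSetPartition 𝒜) {s t : Finset (Fin N)}
    {x y : Fin N} (hs : s ∈ 𝒜) (hxs : x ∈ s) (hys : y ∈ s) (ht : t ∈ 𝒜) : x ∈ t ↔ y ∈ t := by
  have hblock : ∀ z ∈ s, z ∈ t → s = t := fun z hzs hzt =>
    (h𝒜.2 z).unique ⟨hs, hzs⟩ ⟨ht, hzt⟩
  exact ⟨fun hxt => hblock x hxs hxt ▸ hys, fun hyt => hblock y hys hyt ▸ hxs⟩

lemma IsSetPartition.card_le (h𝒜 : IsSetPartition 𝒜) : 𝒜.card ≤ N := by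
  have hdisj : (𝒜 : Set (Finset (Fin N))).PairwiseDisjoint id := fun s hs t ht hst =>
    disjoint_left.2 fun x hxs hxt => hst <| (h𝒜.2 x).unique ⟨hs, hxs⟩ ⟨ht, hxt⟩
  calc 𝒜.card ≤ (𝒜.biUnion id).card := card_le_card_biUnion hdisj h𝒜.1
    _ ≤ N := card_le_univ _ |>.trans_eq (Fintype.card_fin N)

lemma distinctBlocks_insert_iff {U : Set (Fin N)} {p : Fin N} (hpU : p ∉ U) :
    DistinctBlocks 𝒜 (insert p U) ↔
      DistinctBlocks 𝒜 U ∧ ∀ u ∈ U, ∀ t ∈ 𝒜, ¬(u ∈ t ∧ p ∈ t) := by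
  refine ⟨fun h => ⟨fun a ha b hb => h a (.inr ha) b (.inr hb),
    fun u hu => h u (.inr hu) p (.inl rfl) (ne_of_mem_of_not_mem hu hpU)⟩, ?_⟩
  rintro ⟨hU, hp⟩ a (rfl | ha) b (rfl | hb) hab t ht
  · exact absurd rfl hab
  · exact fun h => hp b hb t ht h.symm
  · exact hp a ha t ht
  · exact hU a ha b hb hab t ht

end Partitions

section Comap
variable {M N K : ℕ}

def comapBlocks (f : Fin M → Fin N) (𝒜 : Finset (Finset (Fin N))) : Finset (Finset (Fin M)) :=
  𝒜.image fun t => univ.filter (f · ∈ t)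

lemma mem_comapBlocks {f : Fin M → Fin N} {𝒜 : Finset (Finset (Fin N))} {s : Finset (Fin M)} :
    s ∈ comapBlocks f 𝒜 ↔ ∃ t ∈ 𝒜, ∀ x, x ∈ s ↔ f x ∈ t := by
  simp only [comapBlocks, mem_image]
  refine exists_congr fun t => and_congr_right fun _ => ?_
  rw [eq_comm, Finset.ext_iff]
  simp

lemma comapBlocks_comp (f : Fin N → Fin K) (g : Fin M → Fin N) (𝒜 : Finset (Finset (Fin K))) :
    comapBlocks (f ∘ g) 𝒜 = comapBlocks g (comapBlocks f 𝒜) := by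
  simp only [comapBlocks, image_image]
  congr 1
  ext t x
  simp

lemma comapBlocks_eq_self {f : Fin N → Fin N} {𝒜 : Finset (Finset (Fin N))}
    (h : ∀ t ∈ 𝒜, ∀ x, f x ∈ t ↔ x ∈ t) : comapBlocks f 𝒜 = 𝒜 := by
  refine (image_congr fun t ht => ?_).trans image_id
  ext x
  simp [h t ht]

lemma card_comapBlocks {f : Fin M → Fin N} (hf : Function.Surjective f)
    (𝒜 : Finset (Finset (Fin N))) : (comapBlocks f 𝒜).card = 𝒜.card := by
  refine card_image_of_injective 𝒜 fun t t' h => ?_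
  ext y
  obtain ⟨x, rfl⟩ := hf y
  simpa using Finset.ext_iff.1 h x

lemma IsSetPartition.comapBlocks {f : Fin M → Fin N} {𝒜 : Finset (Finset (Fin N))}
    (h𝒜 : IsSetPartition 𝒜) (hf : ∀ t ∈ 𝒜, ∃ x, f x ∈ t) :
    IsSetPartition (comapBlocks f 𝒜) := by
  refine ⟨fun s hs => ?_, fun x => ?_⟩
  · obtain ⟨t, ht, hst⟩ := mem_comapBlocks.1 hs
    obtain ⟨x, hx⟩ := hf t ht
    exact ⟨x, (hst x).2 hx⟩
  · obtain ⟨t, ⟨ht, hxt⟩, huniq⟩ := h𝒜.2 (f x)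
    refine ⟨univ.filter (f · ∈ t), ⟨mem_image_of_mem _ ht, by simpa using hxt⟩, ?_⟩
    rintro s ⟨hs, hxs⟩
    obtain ⟨t', ht', hst'⟩ := mem_comapBlocks.1 hs
    obtain rfl := huniq t' ⟨ht', (hst' x).1 hxs⟩
    ext y
    simp [hst']

lemma IsSetPartition.comapBlocks_of_surjective {f : Fin M → Fin N}
    {𝒜 : Finset (Finset (Fin N))} (h𝒜 : IsSetPartition 𝒜) (hf : Function.Surjective f) :
    IsSetPartition (_root_.comapBlocks f 𝒜) :=
  h𝒜.comapBlocks fun t ht =>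
    let ⟨y, hy⟩ := h𝒜.1 t ht
    let ⟨x, hx⟩ := hf y
    ⟨x, hx ▸ hy⟩

lemma DistinctBlocks.comapBlocks {f : Fin M → Fin N} {𝒜 : Finset (Finset (Fin N))}
    {S : Set (Fin M)} {T : Set (Fin N)} (h𝒜 : DistinctBlocks 𝒜 T) (hinj : S.InjOn f)
    (hmaps : S.MapsTo f T) : DistinctBlocks (comapBlocks f 𝒜) S := by
  rintro a ha b hb hab s hs ⟨has, hbs⟩
  obtain ⟨t, ht, hst⟩ := mem_comapBlocks.1 hs
  exact h𝒜 _ (hmaps ha) _ (hmaps hb) (fun e => hab (hinj ha hb e)) t ht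
    ⟨(hst a).1 has, (hst b).1 hbs⟩

end Comap

section Collapse
variable {M : ℕ} (p : Fin (M + 1)) (i : Fin M)

def collapse : Fin (M + 1) → Fin M := Fin.insertNth (α := fun _ => Fin M) p i id

@[simp] lemma collapse_self : collapse p i p = i := Fin.insertNth_apply_same _ _ _

@[simp] lemma collapse_succAbove (j : Fin M) : collapse p i (p.succAbove j) = j :=
  Fin.insertNth_apply_succAbove _ _ _ _

lemma succAbove_collapse {x : Fin (M + 1)} (hx : x ≠ p) : p.succAbove (collapse p i x) = x := by
  obtain ⟨j, rfl⟩ := Fin.exists_succAbove_eq hx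
  rw [collapse_succAbove]

lemma collapse_surjective : Function.Surjective (collapse p i) :=
  fun j => ⟨p.succAbove j, collapse_succAbove p i j⟩

variable {p} {U : Set (Fin (M + 1))}

lemma injOn_collapse (hpU : p ∉ U) : U.InjOn (collapse p i) := fun x hx y hy hxy => by
  rw [← succAbove_collapse p i (ne_of_mem_of_not_mem hx hpU), hxy,
    succAbove_collapse p i (ne_of_mem_of_not_mem hy hpU)]

lemma mapsTo_collapse (hpU : p ∉ U) : U.MapsTo (collapse p i) (p.succAbove ⁻¹' U) :=
  fun x hx => by rwa [Set.mem_preimage, succAbove_collapse p i (ne_of_mem_of_not_mem hx hpU)]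

end Collapse

def SeparatingPartition (N c : ℕ) (S T : Set (Fin N)) : Type :=
  {𝒜 : Finset (Finset (Fin N)) //
    IsSetPartition 𝒜 ∧ 𝒜.card = c ∧ DistinctBlocks 𝒜 S ∧ DistinctBlocks 𝒜 T}

namespace SeparatingPartition

section Comap
variable {M N c : ℕ} {S T : Set (Fin M)} {S' T' : Set (Fin N)}

instance : Finite (SeparatingPartition N c S' T') := Subtype.finite

def comap (f : Fin M → Fin N) (hf : Function.Surjective f) (hS : S.InjOn f)
    (hSS' : S.MapsTo f S') (hT : T.InjOn f) (hTT' : T.MapsTo f T')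
    (𝒜 : SeparatingPartition N c S' T') : SeparatingPartition M c S T :=
  ⟨comapBlocks f 𝒜.1, IsSetPartition.comapBlocks_of_surjective 𝒜.2.1 hf,
    (card_comapBlocks hf _).trans 𝒜.2.2.1,
    𝒜.2.2.2.1.comapBlocks hS hSS', 𝒜.2.2.2.2.comapBlocks hT hTT'⟩

lemma card_perm_preimage (σ : Equiv.Perm (Fin N)) :
    Nat.card (SeparatingPartition N c (σ ⁻¹' S') (σ ⁻¹' T')) =
      Nat.card (SeparatingPartition N c S' T') := by
  refine Nat.card_congr
    { toFun := comap σ.symm σ.symm.surjective σ.symm.injective.injOn (fun x hx => by simpa)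
        σ.symm.injective.injOn (fun x hx => by simpa)
      invFun := comap σ σ.surjective σ.injective.injOn (Set.mapsTo_preimage _ _)
        σ.injective.injOn (Set.mapsTo_preimage _ _)
      left_inv := fun 𝒜 => Subtype.ext ?_
      right_inv := fun 𝒜 => Subtype.ext ?_ } <;>
  simp only [comap, ← comapBlocks_comp] <;>
  exact comapBlocks_eq_self fun t _ x => by simp

end Comap

section InsertPoint
variable {M c : ℕ} {p : Fin (M + 1)} {U V : Set (Fin (M + 1))}

section
variable (hpU : p ∉ U) (hpV : p ∉ V)

/-- Adds the point `p` to the block of `i`. -/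
def insertPoint (i : Fin M) :
    SeparatingPartition M c (p.succAbove ⁻¹' U) (p.succAbove ⁻¹' V) →
      SeparatingPartition (M + 1) c U V :=
  comap (collapse p i) (collapse_surjective p i) (injOn_collapse i hpU) (mapsTo_collapse i hpU)
    (injOn_collapse i hpV) (mapsTo_collapse i hpV)

lemma comapBlocks_succAbove_insertPoint (i : Fin M)
    (ℬ : SeparatingPartition M c (p.succAbove ⁻¹' U) (p.succAbove ⁻¹' V)) :
    comapBlocks p.succAbove (insertPoint hpU hpV i ℬ).1 = ℬ.1 := by
  rw [insertPoint, comap, ← comapBlocks_comp]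
  exact comapBlocks_eq_self fun t _ x => by simp

lemma not_distinctBlocks_insertPoint (i : p.succAbove ⁻¹' U)
    (ℬ : SeparatingPartition M c (p.succAbove ⁻¹' U) (p.succAbove ⁻¹' V)) :
    ¬DistinctBlocks (insertPoint hpU hpV i ℬ).1 (insert p U) := by
  rw [distinctBlocks_insert_iff hpU, not_and_or]
  refine .inr fun h => ?_
  obtain ⟨t, ⟨ht, hit⟩, -⟩ := ℬ.2.1.2 i
  exact h _ i.2 _ (mem_image_of_mem _ ht) (by simp [hit])

lemma insertPoint_injective :
    Function.Injective fun x : (p.succAbove ⁻¹' U) ×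
      SeparatingPartition M c (p.succAbove ⁻¹' U) (p.succAbove ⁻¹' V) =>
        insertPoint hpU hpV x.1 x.2 := by
  rintro ⟨i, ℬ⟩ ⟨j, ℬ'⟩ h
  simp only at h
  obtain rfl : ℬ = ℬ' := Subtype.ext <| by
    rw [← comapBlocks_succAbove_insertPoint hpU hpV i ℬ, h, comapBlocks_succAbove_insertPoint]
  obtain ⟨t, ⟨ht, hit⟩, -⟩ := ℬ.2.1.2 i
  have hblock : univ.filter (collapse p i · ∈ t) ∈ (insertPoint hpU hpV j ℬ).1 :=
    h ▸ mem_image_of_mem _ ht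
  obtain ⟨t', ht', hmem⟩ := mem_comapBlocks.1 hblock
  have hi : (i : Fin M) ∈ t' := by simpa using (hmem (p.succAbove i)).1 (by simpa)
  have hj : (j : Fin M) ∈ t' := by simpa using (hmem p).1 (by simpa)
  obtain rfl : i = j := Subtype.ext <| by
    by_contra hne
    exact ℬ.2.2.2.1 i i.2 j j.2 hne t' ht' ⟨hi, hj⟩
  rfl

lemma exists_insertPoint_eq (𝒜 : SeparatingPartition (M + 1) c U V) {i : Fin M}
    {t₀ : Finset (Fin (M + 1))} (ht₀ : t₀ ∈ 𝒜.1) (hit₀ : p.succAbove i ∈ t₀) (hpt₀ : p ∈ t₀) :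
    ∃ ℬ, insertPoint hpU hpV i ℬ = 𝒜 := by
  have hsame : ∀ t ∈ 𝒜.1, p.succAbove i ∈ t ↔ p ∈ t := fun t ht =>
    𝒜.2.1.mem_iff_mem_of_mem_of_mem ht₀ hit₀ hpt₀ ht
  have hcomap : comapBlocks (collapse p i) (comapBlocks p.succAbove 𝒜.1) = 𝒜.1 := by
    rw [← comapBlocks_comp]
    refine comapBlocks_eq_self fun t ht x => ?_
    by_cases hx : x = p
    · simp [hx, hsame t ht]
    · simp [succAbove_collapse p i hx]
  have hmeets : ∀ t ∈ 𝒜.1, ∃ y, p.succAbove y ∈ t := fun t ht => by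
    obtain ⟨x, hx⟩ := 𝒜.2.1.1 t ht
    by_cases hxp : x = p
    · exact ⟨i, (hsame t ht).2 (hxp ▸ hx)⟩
    · obtain ⟨y, rfl⟩ := Fin.exists_succAbove_eq hxp
      exact ⟨y, hx⟩
  refine ⟨⟨comapBlocks p.succAbove 𝒜.1, 𝒜.2.1.comapBlocks hmeets, ?_,
    𝒜.2.2.2.1.comapBlocks Fin.succAbove_right_injective.injOn (Set.mapsTo_preimage _ _),
    𝒜.2.2.2.2.comapBlocks Fin.succAbove_right_injective.injOn (Set.mapsTo_preimage _ _)⟩,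
    Subtype.ext hcomap⟩
  rw [← card_comapBlocks (collapse_surjective p i), hcomap, 𝒜.2.2.1]

lemma insertPoint_surjective (𝒜 : SeparatingPartition (M + 1) c U V)
    (h𝒜 : ¬DistinctBlocks 𝒜.1 (insert p U)) :
    ∃ x : (p.succAbove ⁻¹' U) ×
      SeparatingPartition M c (p.succAbove ⁻¹' U) (p.succAbove ⁻¹' V),
        insertPoint hpU hpV x.1 x.2 = 𝒜 := by
  rw [distinctBlocks_insert_iff hpU] at h𝒜
  push Not at h𝒜
  obtain ⟨u, hu, t₀, ht₀, hut₀, hpt₀⟩ := h𝒜 𝒜.2.2.2.1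
  obtain ⟨i, rfl⟩ := Fin.exists_succAbove_eq (ne_of_mem_of_not_mem hu hpU)
  obtain ⟨ℬ, hℬ⟩ := exists_insertPoint_eq hpU hpV 𝒜 ht₀ hut₀ hpt₀
  exact ⟨(⟨i, hu⟩, ℬ), hℬ⟩

end

theorem card_eq_card_insert_add_card_mul (hpU : p ∉ U) (hpV : p ∉ V) :
    Nat.card (SeparatingPartition (M + 1) c U V) =
      Nat.card (SeparatingPartition (M + 1) c (insert p U) V) +
        Nat.card (p.succAbove ⁻¹' U) *
          Nat.card (SeparatingPartition M c (p.succAbove ⁻¹' U) (p.succAbove ⁻¹' V)) := by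
  classical
  rw [← Nat.card_congr (Equiv.sumCompl fun 𝒜 : SeparatingPartition (M + 1) c U V =>
    DistinctBlocks 𝒜.1 (insert p U)), Nat.card_sum, ← Nat.card_prod]
  congr 1
  · refine Nat.card_congr
      { toFun := fun 𝒜 => ⟨𝒜.1.1, 𝒜.1.2.1, 𝒜.1.2.2.1, 𝒜.2, 𝒜.1.2.2.2.2⟩
        invFun := fun 𝒜 => ⟨⟨𝒜.1, 𝒜.2.1, 𝒜.2.2.1,
          ((distinctBlocks_insert_iff hpU).1 𝒜.2.2.2.1).1, 𝒜.2.2.2.2⟩, 𝒜.2.2.2.1⟩ }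
  · refine (Nat.card_congr (Equiv.ofBijective
      (fun x => ⟨insertPoint hpU hpV x.1 x.2, not_distinctBlocks_insertPoint hpU hpV x.1 x.2⟩)
      ⟨fun x y h => insertPoint_injective hpU hpV (congrArg Subtype.val h),
        fun 𝒜 => ?_⟩)).symm
    obtain ⟨x, hx⟩ := insertPoint_surjective hpU hpV 𝒜.1 𝒜.2
    exact ⟨x, Subtype.ext hx⟩

end InsertPoint

end SeparatingPartition

lemma Fin.preimage_succAbove_setOf {M : ℕ} (p : Fin (M + 1)) {P : ℕ → Prop}
    (hP : ∀ m, P m → m < p) : p.succAbove ⁻¹' {x | P x} = {y : Fin M | P y} := by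
  ext y
  simp only [Set.mem_preimage, Set.mem_ofPred_eq]
  rcases lt_or_ge (y : ℕ) p with hy | hy
  · rw [Fin.succAbove_of_castSucc_lt _ _ (Fin.lt_def.2 hy), Fin.val_castSucc]
  · rw [Fin.succAbove_of_le_castSucc _ _ (Fin.le_def.2 hy), Fin.val_succ]
    exact ⟨fun h => absurd (hP _ h) (by omega), fun h => absurd (hP _ h) (by omega)⟩

lemma Fin.natCard_setOf_val_lt {M r : ℕ} (h : r ≤ M) :
    Nat.card {y : Fin M | (y : ℕ) < r} = r := by
  rw [Nat.card_eq_fintype_card]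
  exact Fintype.card_fin_lt_of_le h

section Swap
variable {N r₁ r₂ : ℕ} (h : r₁ + r₂ < N)

lemma preimage_swap_insert_setOf_lt :
    Equiv.swap (⟨r₁, by omega⟩ : Fin N) ⟨r₁ + r₂, h⟩ ⁻¹' insert ⟨r₁ + r₂, h⟩ {x | (x : ℕ) < r₁} =
      {x : Fin N | (x : ℕ) < r₁ + 1} := by
  ext x
  simp only [Set.mem_preimage, Set.mem_insert_iff, Set.mem_ofPred_eq, Equiv.swap_apply_def]
  split_ifs <;> simp [Fin.ext_iff] at * <;> omega

lemma preimage_swap_setOf_Ico :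
    Equiv.swap (⟨r₁, by omega⟩ : Fin N) ⟨r₁ + r₂, h⟩ ⁻¹' {x | r₁ ≤ (x : ℕ) ∧ (x : ℕ) < r₁ + r₂} =
      {x : Fin N | r₁ + 1 ≤ (x : ℕ) ∧ (x : ℕ) < r₁ + 1 + r₂} := by
  ext x
  simp only [Set.mem_preimage, Set.mem_ofPred_eq, Equiv.swap_apply_def]
  split_ifs <;> simp [Fin.ext_iff] at * <;> omega

end Swap

lemma rrStirling_eq_card {r₁ r₂ n N : ℕ} (k : ℕ) (h : n + r₁ + r₂ = N) :
    rrStirling r₁ r₂ n k = Nat.card (SeparatingPartition N (k + r₂)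
      {x | (x : ℕ) < r₁} {x | r₁ ≤ (x : ℕ) ∧ (x : ℕ) < r₁ + r₂}) := by
  subst h
  rfl

theorem rrStirling_succ (r₁ r₂ n k : ℕ) :
    rrStirling r₁ r₂ (n + 1) k = rrStirling (r₁ + 1) r₂ n k + r₁ * rrStirling r₁ r₂ n k := by
  have h : r₁ + r₂ < n + r₁ + r₂ + 1 := by omega
  set p : Fin (n + r₁ + r₂ + 1) := ⟨r₁ + r₂, h⟩
  have hpU : p ∉ {x : Fin _ | (x : ℕ) < r₁} := by simp [p]
  have hpV : p ∉ {x : Fin _ | r₁ ≤ (x : ℕ) ∧ (x : ℕ) < r₁ + r₂} := by simp [p]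
  rw [rrStirling_eq_card (N := n + r₁ + r₂ + 1) k (by omega),
    SeparatingPartition.card_eq_card_insert_add_card_mul hpU hpV,
    p.preimage_succAbove_setOf (P := (· < r₁)) (fun m hm => by simp [p]; omega),
    p.preimage_succAbove_setOf (P := fun m => r₁ ≤ m ∧ m < r₁ + r₂)
      (fun m hm => by simp [p]; omega),
    Fin.natCard_setOf_val_lt (by omega),
    ← SeparatingPartition.card_perm_preimage (Equiv.swap ⟨r₁, by omega⟩ p),
    preimage_swap_insert_setOf_lt, preimage_swap_setOf_Ico,
    rrStirling_eq_card (N := n + r₁ + r₂ + 1) k (by omega), rrStirling_eq_card k rfl]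

theorem rrStirling_zero_left (r₂ n k : ℕ) : rrStirling 0 r₂ n k = rStirling r₂ n k :=
  Nat.card_congr <| Equiv.subtypeEquivRight fun 𝒜 => by simp [DistinctBlocks]

theorem rrStirling_eq_zero_of_lt {r₁ r₂ n k : ℕ} (h : n + r₁ < k) :
    rrStirling r₁ r₂ n k = 0 := by
  rw [rrStirling_eq_card k rfl, Nat.card_eq_zero]
  refine .inl ⟨fun 𝒜 => ?_⟩
  have := 𝒜.2.1.card_le
  have := 𝒜.2.2.1
  omega

theorem rrBell_eq_sum_range {r₁ r₂ n m : ℕ} (hm : n + r₁ < m) (z : ℝ) :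
    rrBell r₁ r₂ n z = ∑ k ∈ range m, (rrStirling r₁ r₂ n k : ℝ) * z ^ k := by
  refine sum_subset (range_subset_range.2 (by omega)) fun k _ hk => ?_
  rw [rrStirling_eq_zero_of_lt (by simp at hk; omega), Nat.cast_zero, zero_mul]

theorem rrBell_succ (r₁ r₂ n : ℕ) (z : ℝ) :
    rrBell r₁ r₂ (n + 1) z = rrBell (r₁ + 1) r₂ n z + r₁ * rrBell r₁ r₂ n z := by
  rw [rrBell_eq_sum_range (m := n + r₁ + 2) (by omega),
    rrBell_eq_sum_range (m := n + r₁ + 2) (by omega),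
    rrBell_eq_sum_range (m := n + r₁ + 2) (by omega), mul_sum, ← sum_add_distrib]
  refine sum_congr rfl fun k _ => ?_
  rw [rrStirling_succ]
  push_cast
  ring

theorem rrBell_zero_left (r₂ n : ℕ) (z : ℝ) : rrBell 0 r₂ n z = rBell r₂ n z := by
  simp only [rrBell, rBell, rrStirling_zero_left, add_zero]

section ShiftOperator
open Polynomial
variable {R : Type*} [CommRing R]

def seqShift : Module.End R (ℕ → R) := LinearMap.funLeft R R (· + 1)

lemma seqShift_pow_apply (k : ℕ) (b : ℕ → R) (n : ℕ) : (seqShift ^ k) b n = b (n + k) := by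
  induction k generalizing b with
  | zero => rfl
  | succ k ih => rw [pow_succ, Module.End.mul_apply, ih]; rfl

lemma coeff_descPochhammer_int (r k : ℕ) :
    (descPochhammer ℤ r).coeff k = (-1) ^ (r - k) * Nat.stirlingFirst r k := by
  induction r generalizing k with
  | zero => cases k <;> simp [coeff_one]
  | succ r ih =>
    cases k with
    | zero => simp [coeff_zero_eq_eval_zero]
    | succ k =>
      rw [descPochhammer_succ_right, ← C_eq_natCast, coeff_mul_X_sub_C, ih, ih,
        Nat.stirlingFirst_succ_succ, show r + 1 - (k + 1) = r - k by omega]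
      rcases lt_or_ge k r with hk | hk
      · rw [show r - k = r - (k + 1) + 1 by omega]
        push_cast
        ring
      · rw [Nat.stirlingFirst_eq_zero_of_lt (by omega : r < k + 1)]
        push_cast
        ring

theorem eq_aeval_descPochhammer_of_succ {f : ℕ → ℕ → R}
    (hf : ∀ r n, f (r + 1) n = f r (n + 1) - r * f r n) (r : ℕ) :
    f r = aeval seqShift (descPochhammer ℤ r) (f 0) := by
  induction r with
  | zero => simp
  | succ r ih =>
    rw [descPochhammer_succ_right, mul_comm, map_mul, Module.End.mul_apply, ← ih]
    ext n
    simp [hf, seqShift]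

theorem eq_sum_stirlingFirst_of_succ {f : ℕ → ℕ → R}
    (hf : ∀ r n, f (r + 1) n = f r (n + 1) - r * f r n) (r n : ℕ) :
    f r n = ∑ k ∈ range (r + 1), (-1) ^ (r - k) * (Nat.stirlingFirst r k : R) * f 0 (n + k) := by
  rw [eq_aeval_descPochhammer_of_succ hf, aeval_eq_sum_range, descPochhammer_natDegree,
    LinearMap.sum_apply, Finset.sum_apply]
  refine sum_congr rfl fun k _ => ?_
  rw [LinearMap.smul_apply, Pi.smul_apply, seqShift_pow_apply, coeff_descPochhammer_int,
    zsmul_eq_mul]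
  push_cast
  ring

end ShiftOperator

theorem sabs_eq_stirlingFirst : ∀ n k, sabs n k = Nat.stirlingFirst n k
  | 0, 0 | 0, _ + 1 | _ + 1, 0 => rfl
  | n + 1, k + 1 => by
    rw [sabs, Nat.stirlingFirst_succ_succ, sabs_eq_stirlingFirst n (k + 1),
      sabs_eq_stirlingFirst n k]

theorem rrBell_eq_signed_sum_rBell_general (n r₁ r₂ : ℕ) (z : ℝ) :
    rrBell r₁ r₂ n z =
      ∑ k ∈ range (r₁ + 1), (-1 : ℝ) ^ (r₁ - k) * (sabs r₁ k : ℝ) * rBell r₂ (n + k) z := by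
  have hrec : ∀ r m, rrBell (r + 1) r₂ m z = rrBell r r₂ (m + 1) z - r * rrBell r r₂ m z :=
    fun r m => by rw [rrBell_succ]; ring
  simp only [eq_sum_stirlingFirst_of_succ (f := fun r m => rrBell r r₂ m z) hrec r₁ n,
    rrBell_zero_left, sabs_eq_stirlingFirst]

/-- $B_n(z;r_1,r_2) = \sum_{k=0}^{r_1} (-1)^{r_1-k} |s(r_1,k)| B_{n+k}(z;r_2)$. -/
theorem rrBell_eq_signed_sum_rBell (n r₁ r₂ : ℕ) (h : r₁ ≤ r₂) (z : ℝ) :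
    rrBell r₁ r₂ n z =
      ∑ k ∈ range (r₁ + 1), (-1 : ℝ) ^ (r₁ - k) * (sabs r₁ k : ℝ) * rBell r₂ (n + k) z :=
  rrBell_eq_signed_sum_rBell_general n r₁ r₂ z
end

section
/- The exponential generating function of the shifted r-Bell polynomials satisfies Σ_{n≥0} B_{n+m}(z;r) t^n/n! = B_m(z·e^t; r) · exp(z(e^t − 1) + rt) for all nonnegative integers m, r (as an identity of formal power series in t, or of real analytic functions). -/
open Finset

/-!
Call `0, …, r - 1` the special points of `Fin (n + r)`. Sorting the maps
`Fin (n + r) → Fin (x + r)` that fix the special points by their kernel partition gives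
`(x + r)^n = ∑ₖ {n+r brace k+r}_r x(x-1)⋯(x-k+1)`: the kernel is a partition with the special points
in distinct blocks, and such a map is an injective labelling of the remaining `k` blocks by `Fin x`.
Together with `∑_j j(j-1)⋯(j-k+1) z^j / j! = z^k e^z` this gives Dobiński's formula
`e^z B_N(z;r) = ∑_j (j + r)^N z^j / j!`. Inserting it into the generating function yields the
absolutely convergent double series `∑_{j,n} (j + r)^(n+m) z^j t^n / (j! n!)`; summing over `n`
first gives `e^{rt} ∑_j (j + r)^m (z e^t)^j / j! = e^{rt} e^{z e^t} B_m(z e^t; r)`.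
-/

namespace IsSetPartition

variable {N : ℕ} {𝒜 : Finset (Finset (Fin N))}

noncomputable def block (h : IsSetPartition 𝒜) (i : Fin N) : {t // t ∈ 𝒜} :=
  ⟨(h.2 i).exists.choose, (h.2 i).exists.choose_spec.1⟩

noncomputable def rep (h : IsSetPartition 𝒜) (t : {t // t ∈ 𝒜}) : Fin N :=
  (h.1 t.1 t.2).choose

lemma mem_block (h : IsSetPartition 𝒜) (i : Fin N) : i ∈ (h.block i).1 :=
  (h.2 i).exists.choose_spec.2

lemma block_eq (h : IsSetPartition 𝒜) {t : Finset (Fin N)} (ht : t ∈ 𝒜) {i : Fin N}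
    (hi : i ∈ t) : h.block i = ⟨t, ht⟩ :=
  Subtype.ext <| (h.2 i).unique ⟨(h.block i).2, h.mem_block i⟩ ⟨ht, hi⟩

lemma block_eq_block_iff (h : IsSetPartition 𝒜) {i j : Fin N} :
    h.block j = h.block i ↔ j ∈ (h.block i).1 :=
  ⟨fun hji => hji ▸ h.mem_block j, fun hj => h.block_eq _ hj⟩

lemma block_rep (h : IsSetPartition 𝒜) (t : {t // t ∈ 𝒜}) : h.block (h.rep t) = t :=
  h.block_eq t.2 (h.1 t.1 t.2).choose_spec

lemma block_surjective (h : IsSetPartition 𝒜) : Function.Surjective h.block :=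
  fun t => ⟨h.rep t, h.block_rep t⟩

lemma card_le_s11 (h : IsSetPartition 𝒜) : 𝒜.card ≤ N := by
  simpa using card_le_card_of_surjOn (s := univ) (fun i => (h.block i).1)
    fun t ht => ⟨h.rep ⟨t, ht⟩, mem_univ _, congrArg Subtype.val (h.block_rep ⟨t, ht⟩)⟩

end IsSetPartition

section kernel

variable {N : ℕ} {β : Type*} [DecidableEq β]

def kerPartition (f : Fin N → β) : Finset (Finset (Fin N)) :=
  univ.image fun i => univ.filter fun j => f j = f i

lemma eq_fiber_of_mem_kerPartition {f : Fin N → β} {t : Finset (Fin N)}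
    (ht : t ∈ kerPartition f) {i : Fin N} (hi : i ∈ t) :
    t = univ.filter fun j => f j = f i := by
  obtain ⟨k, -, rfl⟩ := mem_image.1 ht
  rw [(mem_filter.1 hi).2]

lemma isSetPartition_kerPartition (f : Fin N → β) : IsSetPartition (kerPartition f) := by
  refine ⟨fun t ht => ?_, fun i => ⟨_, ⟨mem_image_of_mem _ (mem_univ i), by simp⟩, ?_⟩⟩
  · obtain ⟨k, -, rfl⟩ := mem_image.1 ht
    exact ⟨k, by simp⟩
  · rintro t ⟨ht, hi⟩
    exact eq_fiber_of_mem_kerPartition ht hi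

variable {𝒜 : Finset (Finset (Fin N))}

lemma IsSetPartition.block_eq_block_iff_of_kerPartition_eq (h : IsSetPartition 𝒜)
    {f : Fin N → β} (hf : kerPartition f = 𝒜) {i j : Fin N} :
    h.block j = h.block i ↔ f j = f i := by
  have hi := eq_fiber_of_mem_kerPartition (by rw [hf]; exact (h.block i).2) (h.mem_block i)
  rw [h.block_eq_block_iff, hi, mem_filter]
  simp

lemma kerPartition_comp_block (h : IsSetPartition 𝒜) {g : {t // t ∈ 𝒜} → β}
    (hg : Function.Injective g) : kerPartition (g ∘ h.block) = 𝒜 := by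
  have hfiber (i : Fin N) :
      (univ.filter fun j => g (h.block j) = g (h.block i)) = (h.block i).1 := by
    ext j
    simp [hg.eq_iff, h.block_eq_block_iff]
  ext t
  simp only [kerPartition, Function.comp_apply, hfiber, mem_image, mem_univ, true_and]
  refine ⟨?_, fun ht => ⟨h.rep ⟨t, ht⟩, by rw [h.block_rep]⟩⟩
  rintro ⟨i, rfl⟩
  exact (h.block i).2

noncomputable def kerPartitionEquiv (h : IsSetPartition 𝒜) :
    {f : Fin N → β // kerPartition f = 𝒜} ≃ ({t // t ∈ 𝒜} ↪ β) where
  toFun f := ⟨f.1 ∘ h.rep, fun t₁ t₂ heq => by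
    rw [← h.block_rep t₁, ← h.block_rep t₂, h.block_eq_block_iff_of_kerPartition_eq f.2]
    exact heq⟩
  invFun g := ⟨g ∘ h.block, kerPartition_comp_block h g.injective⟩
  left_inv f := Subtype.ext <| funext fun i =>
    (h.block_eq_block_iff_of_kerPartition_eq f.2).1 (h.block_rep _)
  right_inv g := by
    ext t
    exact congrArg (fun t => (g t : β)) (h.block_rep t)

end kernel

section special

variable {r n x : ℕ}

def IsRPartition (r n : ℕ) (𝒜 : Finset (Finset (Fin (n + r)))) : Prop :=
  IsSetPartition 𝒜 ∧ DistinctBlocks 𝒜 {i | (i : ℕ) < r}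

def ordinaryBlocks (r : ℕ) (𝒜 : Finset (Finset (Fin (n + r)))) : Finset (Finset (Fin (n + r))) :=
  𝒜.filter fun t => ∀ i ∈ t, r ≤ (i : ℕ)

def FixesSpecials (f : Fin (n + r) → Fin (x + r)) : Prop :=
  ∀ i : Fin (n + r), (i : ℕ) < r → (f i : ℕ) = i

variable {𝒜 : Finset (Finset (Fin (n + r)))}

lemma IsRPartition.block_injOn (h : IsRPartition r n 𝒜) :
    Set.InjOn h.1.block {i | (i : ℕ) < r} := by
  intro i hi j hj hij
  by_contra hne
  exact h.2 i hi j hj hne _ (h.1.block j).2 ⟨hij ▸ h.1.mem_block i, h.1.mem_block j⟩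

lemma IsRPartition.card_eq (h : IsRPartition r n 𝒜) :
    𝒜.card = (ordinaryBlocks r 𝒜).card + r := by
  classical
  set S := univ.filter fun i : Fin (n + r) => (i : ℕ) < r
  have hspecial : 𝒜.filter (fun t : Finset (Fin (n + r)) => ¬ ∀ i ∈ t, r ≤ (i : ℕ)) =
      S.image fun i => (h.1.block i).1 := by
    ext t
    simp only [S, mem_filter, mem_image, mem_univ, true_and, not_forall, not_le, exists_prop]
    constructor
    · rintro ⟨ht, i, hi, hir⟩
      exact ⟨i, hir, by rw [h.1.block_eq ht hi]⟩
    · rintro ⟨i, hir, rfl⟩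
      exact ⟨(h.1.block i).2, i, h.1.mem_block i, hir⟩
  have hinj : Set.InjOn (fun i => (h.1.block i).1) S :=
    fun i hi j hj hij =>
      h.block_injOn (by simpa [S] using hi) (by simpa [S] using hj) (Subtype.ext hij)
  rw [← card_filter_add_card_filter_not (s := 𝒜) (fun t => ∀ i ∈ t, r ≤ (i : ℕ)), hspecial,
    card_image_of_injOn hinj, Fin.card_filter_val_lt, min_eq_right (Nat.le_add_left r n)]
  rfl

lemma IsRPartition.card_ordinaryBlocks_le (h : IsRPartition r n 𝒜) :
    (ordinaryBlocks r 𝒜).card ≤ n := by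
  have := h.1.card_le_s11
  rw [h.card_eq] at this
  omega

lemma isRPartition_kerPartition {f : Fin (n + r) → Fin (x + r)} (hf : FixesSpecials f) :
    IsRPartition r n (kerPartition f) := by
  refine ⟨isSetPartition_kerPartition f, fun i hi j hj hij t ht ⟨hit, hjt⟩ => hij ?_⟩
  rw [eq_fiber_of_mem_kerPartition ht hit, mem_filter] at hjt
  exact Fin.ext <| by rw [← hf i hi, ← hf j hj, hjt.2]

end special

section labelling

variable {r n x : ℕ} {𝒜 : Finset (Finset (Fin (n + r)))}

noncomputable def blockLabel (e : {t // t ∈ ordinaryBlocks r 𝒜} ↪ Fin x) (t : {t // t ∈ 𝒜}) :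
    Fin (x + r) :=
  if hs : ∃ i ∈ t.1, (i : ℕ) < r then ⟨hs.choose, by have := hs.choose_spec.2; omega⟩
  else (e ⟨t.1, mem_filter.2 ⟨t.2, by simpa using hs⟩⟩).addNat r

variable (e : {t // t ∈ ordinaryBlocks r 𝒜} ↪ Fin x)

lemma blockLabel_of_mem (h : IsRPartition r n 𝒜) {t : {t // t ∈ 𝒜}} {i : Fin (n + r)}
    (hi : i ∈ t.1) (hir : (i : ℕ) < r) : (blockLabel e t : ℕ) = i := by
  have hs : ∃ i ∈ t.1, (i : ℕ) < r := ⟨i, hi, hir⟩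
  rw [blockLabel, dif_pos hs]
  by_contra hne
  exact h.2 _ hs.choose_spec.2 i hir (fun heq => hne (congrArg Fin.val heq)) t.1 t.2
    ⟨hs.choose_spec.1, hi⟩

lemma mem_ordinaryBlocks_iff (t : {t // t ∈ 𝒜}) :
    t.1 ∈ ordinaryBlocks r 𝒜 ↔ ¬ ∃ i ∈ t.1, (i : ℕ) < r := by
  simp [ordinaryBlocks, t.2]

lemma blockLabel_of_mem_ordinaryBlocks {t : {t // t ∈ 𝒜}} (ht : t.1 ∈ ordinaryBlocks r 𝒜) :
    blockLabel e t = (e ⟨t.1, ht⟩).addNat r := by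
  rw [blockLabel, dif_neg ((mem_ordinaryBlocks_iff t).1 ht)]

lemma blockLabel_lt_iff (t : {t // t ∈ 𝒜}) :
    (blockLabel e t : ℕ) < r ↔ ∃ i ∈ t.1, (i : ℕ) < r := by
  by_cases hs : ∃ i ∈ t.1, (i : ℕ) < r
  · simp only [blockLabel, hs, iff_true]
    exact hs.choose_spec.2
  · rw [blockLabel_of_mem_ordinaryBlocks e ((mem_ordinaryBlocks_iff t).2 hs), Fin.val_addNat]
    simp [hs]

lemma blockLabel_injective (h : IsRPartition r n 𝒜) : Function.Injective (blockLabel e) := by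
  intro t₁ t₂ heq
  have hspecial : (∃ i ∈ t₁.1, (i : ℕ) < r) ↔ ∃ i ∈ t₂.1, (i : ℕ) < r := by
    rw [← blockLabel_lt_iff, ← blockLabel_lt_iff, heq]
  by_cases hs₁ : ∃ i ∈ t₁.1, (i : ℕ) < r
  · obtain ⟨i₁, hi₁, hr₁⟩ := hs₁
    obtain ⟨i₂, hi₂, hr₂⟩ := hspecial.1 ⟨i₁, hi₁, hr₁⟩
    obtain rfl : i₁ = i₂ := Fin.ext <| by
      rw [← blockLabel_of_mem e h hi₁ hr₁, ← blockLabel_of_mem e h hi₂ hr₂, heq]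
    exact (h.1.block_eq t₁.2 hi₁).symm.trans (h.1.block_eq t₂.2 hi₂)
  · rw [blockLabel_of_mem_ordinaryBlocks e ((mem_ordinaryBlocks_iff t₁).2 hs₁),
      blockLabel_of_mem_ordinaryBlocks e
        ((mem_ordinaryBlocks_iff t₂).2 (hspecial.not.1 hs₁))] at heq
    exact Subtype.ext (congrArg Subtype.val (e.injective ((Fin.addNat_inj r).1 heq)) :)

end labelling

section fixing

variable {r n x : ℕ} {𝒜 : Finset (Finset (Fin (n + r)))}

lemma IsRPartition.apply_eq_of_mem (h : IsRPartition r n 𝒜) {g : {t // t ∈ 𝒜} → Fin (x + r)}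
    (hg : FixesSpecials (g ∘ h.1.block)) {t : {t // t ∈ 𝒜}} {i : Fin (n + r)} (hi : i ∈ t.1)
    (hir : (i : ℕ) < r) : (g t : ℕ) = i := by
  simpa [FixesSpecials, h.1.block_eq t.2 hi] using hg i hir

lemma IsRPartition.le_apply_of_mem_ordinaryBlocks (h : IsRPartition r n 𝒜)
    {g : {t // t ∈ 𝒜} ↪ Fin (x + r)} (hg : FixesSpecials (g ∘ h.1.block)) {t : {t // t ∈ 𝒜}}
    (ht : t.1 ∈ ordinaryBlocks r 𝒜) : r ≤ (g t : ℕ) := by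
  by_contra! hlt
  set i : Fin (n + r) := ⟨g t, by omega⟩
  have hblock : h.1.block i = t := g.injective (Fin.ext (hg i hlt))
  exact (mem_ordinaryBlocks_iff t).1 ht ⟨i, hblock ▸ h.1.mem_block i, hlt⟩

def ordinaryBlocks.toBlock (t : {t // t ∈ ordinaryBlocks r 𝒜}) : {t // t ∈ 𝒜} :=
  ⟨t.1, (mem_filter.1 t.2).1⟩

noncomputable def IsRPartition.fixingLabellingEquiv (h : IsRPartition r n 𝒜) :
    {g : {t // t ∈ 𝒜} ↪ Fin (x + r) // FixesSpecials (g ∘ h.1.block)} ≃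
      ({t // t ∈ ordinaryBlocks r 𝒜} ↪ Fin x) where
  toFun g :=
    have hle (t : {t // t ∈ ordinaryBlocks r 𝒜}) : r ≤ (g.1 (ordinaryBlocks.toBlock t) : ℕ) :=
      h.le_apply_of_mem_ordinaryBlocks g.2 t.2
    ⟨fun t => ⟨g.1 (ordinaryBlocks.toBlock t) - r,
      by have := (g.1 (ordinaryBlocks.toBlock t)).isLt; have := hle t; omega⟩, fun t₁ t₂ heq => by
      have hv := g.1.injective <| Fin.ext <|
        (tsub_left_inj (hle t₁) (hle t₂)).1 (Fin.mk.inj_iff.1 heq)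
      exact Subtype.ext (congrArg Subtype.val hv :)⟩
  invFun e := ⟨⟨blockLabel e, blockLabel_injective e h⟩,
    fun i hir => blockLabel_of_mem e h (h.1.mem_block i) hir⟩
  left_inv g := by
    refine Subtype.ext (Function.Embedding.ext fun t => Fin.ext ?_)
    simp only [Function.Embedding.coeFn_mk]
    by_cases hs : ∃ i ∈ t.1, (i : ℕ) < r
    · obtain ⟨i, hi, hir⟩ := hs
      rw [blockLabel_of_mem _ h hi hir, h.apply_eq_of_mem g.2 hi hir]
    · have ht := (mem_ordinaryBlocks_iff t).2 hs
      have hle := h.le_apply_of_mem_ordinaryBlocks g.2 ht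
      rw [blockLabel_of_mem_ordinaryBlocks _ ht, Fin.val_addNat]
      show (g.1 t : ℕ) - r + r = g.1 t
      omega
  right_inv e := by
    ext t
    show (blockLabel e (ordinaryBlocks.toBlock t) : ℕ) - r = e t
    rw [blockLabel_of_mem_ordinaryBlocks e (t := ordinaryBlocks.toBlock t) t.2, Fin.val_addNat,
      Nat.add_sub_cancel]
    rfl

end fixing

section counting

variable {r n x : ℕ}

lemma card_fixesSpecials (r n x : ℕ) :
    Nat.card {f : Fin (n + r) → Fin (x + r) // FixesSpecials f} = (x + r) ^ n := by
  let Allowed (i : Fin (n + r)) (y : Fin (x + r)) : Prop := (i : ℕ) < r → (y : ℕ) = i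
  have hcard (i : Fin (n + r)) :
      Nat.card {y // Allowed i y} = if (i : ℕ) < r then 1 else x + r := by
    split_ifs with hi
    · exact Nat.card_eq_one_iff_exists.2
        ⟨⟨⟨i, by omega⟩, fun _ => rfl⟩, fun y => Subtype.ext (Fin.ext (y.2 hi))⟩
    · simp [Allowed, hi]
  have e : {f : Fin (n + r) → Fin (x + r) // FixesSpecials f} ≃ ∀ i, {y // Allowed i y} :=
    Equiv.subtypePiEquivPi (p := Allowed)
  rw [Nat.card_congr e, Nat.card_pi, prod_congr rfl fun i _ => hcard i,
    Fin.prod_univ_eq_prod_range (fun i => if i < r then 1 else x + r), add_comm n r,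
    prod_range_add, prod_congr rfl fun i hi => if_pos (mem_range.1 hi)]
  simp

lemma IsRPartition.card_fixesSpecials_kerPartition_eq {𝒜 : Finset (Finset (Fin (n + r)))}
    (h : IsRPartition r n 𝒜) :
    Nat.card {f : Fin (n + r) → Fin (x + r) // FixesSpecials f ∧ kerPartition f = 𝒜} =
      x.descFactorial (ordinaryBlocks r 𝒜).card := by
  have e := calc
    {f : Fin (n + r) → Fin (x + r) // FixesSpecials f ∧ kerPartition f = 𝒜}
      ≃ {f : {f : Fin (n + r) → Fin (x + r) // kerPartition f = 𝒜} // FixesSpecials f.1} :=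
        ((Equiv.subtypeEquivRight fun _ => and_comm).trans
          (Equiv.subtypeSubtypeEquivSubtypeInter _ _).symm)
    _ ≃ {g : {t // t ∈ 𝒜} ↪ Fin (x + r) // FixesSpecials (g ∘ h.1.block)} :=
        (Equiv.subtypeEquiv (kerPartitionEquiv h.1).symm fun _ => Iff.rfl).symm
    _ ≃ ({t // t ∈ ordinaryBlocks r 𝒜} ↪ Fin x) := h.fixingLabellingEquiv
  rw [Nat.card_congr e, Nat.card_eq_fintype_card, Fintype.card_embedding_eq, Fintype.card_fin,
    Fintype.card_coe]

end counting

lemma rStirling_eq_card (r n k : ℕ) :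
    rStirling r n k =
      Nat.card {𝒜 : Finset (Finset (Fin (n + r))) //
        IsRPartition r n 𝒜 ∧ (ordinaryBlocks r 𝒜).card = k} :=
  Nat.card_congr <| Equiv.subtypeEquivRight fun 𝒜 =>
    ⟨fun ⟨hP, hcard, hD⟩ => ⟨⟨hP, hD⟩, by have := IsRPartition.card_eq ⟨hP, hD⟩; omega⟩,
      fun ⟨h, hk⟩ => ⟨h.1, by rw [h.card_eq, hk], h.2⟩⟩

theorem pow_eq_sum_rStirling_mul_descFactorial (r n x : ℕ) :
    (x + r) ^ n = ∑ k ∈ range (n + 1), rStirling r n k * x.descFactorial k := by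
  classical
  set R := univ.filter (IsRPartition r n)
  have hfibre (𝒜) (h𝒜 : 𝒜 ∈ R) :
      #(univ.filter fun f : Fin (n + r) → Fin (x + r) => FixesSpecials f ∧ kerPartition f = 𝒜) =
        x.descFactorial (ordinaryBlocks r 𝒜).card := by
    rw [← (mem_filter.1 h𝒜).2.card_fixesSpecials_kerPartition_eq, Nat.card_eq_fintype_card,
      Fintype.card_subtype]
  have hstirling (k) : #(R.filter fun 𝒜 => (ordinaryBlocks r 𝒜).card = k) = rStirling r n k := by
    rw [rStirling_eq_card, Nat.card_eq_fintype_card, Fintype.card_subtype, filter_filter]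
  calc (x + r) ^ n
      = #(univ.filter fun f : Fin (n + r) → Fin (x + r) => FixesSpecials f) := by
        rw [← card_fixesSpecials r n x, Nat.card_eq_fintype_card, Fintype.card_subtype]
    _ = ∑ 𝒜 ∈ R, x.descFactorial (ordinaryBlocks r 𝒜).card := by
        rw [card_eq_sum_card_fiberwise (f := kerPartition) (t := R)
          fun f hf => mem_filter.2 ⟨mem_univ _, isRPartition_kerPartition (mem_filter.1 hf).2⟩]
        exact sum_congr rfl fun 𝒜 h𝒜 => by rw [filter_filter, hfibre 𝒜 h𝒜]
    _ = ∑ k ∈ range (n + 1), rStirling r n k * x.descFactorial k := by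
        rw [← sum_fiberwise_of_maps_to' (t := range (n + 1)) fun 𝒜 h𝒜 =>
          mem_range.2 (Nat.lt_succ_of_le (mem_filter.1 h𝒜).2.card_ordinaryBlocks_le)]
        simp only [sum_const, smul_eq_mul, hstirling]

open scoped Nat

lemma Real.hasSum_pow_div_factorial (x : ℝ) : HasSum (fun n => x ^ n / n !) (Real.exp x) := by
  rw [Real.exp_eq_exp_ℝ]
  exact NormedSpace.expSeries_div_hasSum_exp x

lemma hasSum_descFactorial_mul_pow_div_factorial (k : ℕ) (z : ℝ) :
    HasSum (fun j : ℕ => (j.descFactorial k : ℝ) * z ^ j / j !) (z ^ k * Real.exp z) := by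
  have hinitial : ∑ i ∈ range k, (i.descFactorial k : ℝ) * z ^ i / i ! = 0 :=
    sum_eq_zero fun i hi => by simp [Nat.descFactorial_eq_zero_iff_lt.2 (mem_range.1 hi)]
  have hshift (i : ℕ) :
      ((i + k).descFactorial k : ℝ) * z ^ (i + k) / (i + k)! = z ^ k * (z ^ i / i !) := by
    have h := Nat.factorial_mul_descFactorial (Nat.le_add_left k i)
    rw [Nat.add_sub_cancel] at h
    rw [← h, Nat.cast_mul, pow_add]
    field_simp
  rw [← hasSum_nat_add_iff' k, hinitial, sub_zero]
  simpa only [hshift] using (Real.hasSum_pow_div_factorial z).mul_left (z ^ k)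

/-- Dobiński's formula for the `r`-Bell polynomials. -/
theorem hasSum_rBell (r N : ℕ) (z : ℝ) :
    HasSum (fun j : ℕ => ((j : ℝ) + r) ^ N * z ^ j / j !) (Real.exp z * rBell r N z) := by
  have hpow (j : ℕ) : ((j : ℝ) + r) ^ N =
      ∑ k ∈ range (N + 1), (rStirling r N k : ℝ) * j.descFactorial k := by
    exact_mod_cast pow_eq_sum_rStirling_mul_descFactorial r N j
  simp_rw [hpow, sum_mul, sum_div, rBell, mul_sum]
  refine hasSum_sum fun k _ => ?_
  rw [mul_left_comm, mul_comm (Real.exp z)]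
  exact ((hasSum_descFactorial_mul_pow_div_factorial k z).mul_left _).congr_fun fun j => by ring

section egf

variable (r m : ℕ)

noncomputable def shiftedDobinskiTerm (z t : ℝ) (p : ℕ × ℕ) : ℝ :=
  ((p.1 : ℝ) + r) ^ (p.2 + m) * z ^ p.1 / p.1 ! * (t ^ p.2 / p.2 !)

lemma hasSum_shiftedDobinskiTerm_row (z t : ℝ) (j : ℕ) :
    HasSum (fun n => shiftedDobinskiTerm r m z t (j, n))
      (Real.exp (r * t) * (((j : ℝ) + r) ^ m * (z * Real.exp t) ^ j / j !)) := by
  have hvalue : Real.exp (r * t) * (((j : ℝ) + r) ^ m * (z * Real.exp t) ^ j / j !) =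
      ((j : ℝ) + r) ^ m * z ^ j / j ! * Real.exp (((j : ℝ) + r) * t) := by
    rw [mul_pow, ← Real.exp_nat_mul, add_mul, Real.exp_add]
    ring
  rw [hvalue]
  exact ((Real.hasSum_pow_div_factorial _).mul_left _).congr_fun fun n => by
    rw [shiftedDobinskiTerm, mul_pow, pow_add]
    ring

lemma hasSum_shiftedDobinskiTerm_col (z t : ℝ) (n : ℕ) :
    HasSum (fun j => shiftedDobinskiTerm r m z t (j, n))
      (Real.exp z * (rBell r (n + m) z * t ^ n / n !)) := by
  rw [mul_div_assoc, ← mul_assoc]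
  exact (hasSum_rBell r (n + m) z).mul_right _

lemma abs_shiftedDobinskiTerm (z t : ℝ) (p : ℕ × ℕ) :
    |shiftedDobinskiTerm r m z t p| = shiftedDobinskiTerm r m |z| |t| p := by
  simp only [shiftedDobinskiTerm, abs_mul, abs_div, abs_pow, Nat.abs_cast]
  rw [abs_of_nonneg (by positivity : (0 : ℝ) ≤ p.1 + r)]

lemma summable_shiftedDobinskiTerm (z t : ℝ) : Summable (shiftedDobinskiTerm r m z t) := by
  refine Summable.of_norm ?_
  simp only [Real.norm_eq_abs, abs_shiftedDobinskiTerm]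
  rw [summable_prod_of_nonneg fun p => by rw [← abs_shiftedDobinskiTerm]; exact abs_nonneg _]
  refine ⟨fun j => (hasSum_shiftedDobinskiTerm_row r m |z| |t| j).summable, ?_⟩
  simp only [fun j => (hasSum_shiftedDobinskiTerm_row r m |z| |t| j).tsum_eq]
  exact ((hasSum_rBell r m (|z| * Real.exp |t|)).mul_left _).summable

end egf

/-- $\sum_{n\ge0} B_{n+m}(z;r) t^n/n! = B_m(z e^t;r) e^{z(e^t-1)+rt}$. -/
theorem rBell_shifted_egf (m r : ℕ) (z t : ℝ) :
    Summable (fun n : ℕ => rBell r (n + m) z * t ^ n / (Nat.factorial n)) ∧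
    (∑' n : ℕ, rBell r (n + m) z * t ^ n / (Nat.factorial n)) =
      rBell r m (z * Real.exp t) * Real.exp (z * (Real.exp t - 1) + r * t) := by
  have hF := (summable_shiftedDobinskiTerm r m z t).hasSum
  have htotal : ∑' p, shiftedDobinskiTerm r m z t p =
      Real.exp (r * t) * (Real.exp (z * Real.exp t) * rBell r m (z * Real.exp t)) :=
    (hF.prod_fiberwise (hasSum_shiftedDobinskiTerm_row r m z t)).unique
      ((hasSum_rBell r m _).mul_left _)
  have hcols := ((Equiv.prodComm ℕ ℕ).hasSum_iff.2 hF).prod_fiberwise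
    (hasSum_shiftedDobinskiTerm_col r m z t)
  rw [htotal] at hcols
  have h := hcols.div_const (Real.exp z)
  simp only [mul_div_cancel_left₀ _ (Real.exp_ne_zero z)] at h
  have hvalue : Real.exp (r * t) * (Real.exp (z * Real.exp t) * rBell r m (z * Real.exp t)) /
      Real.exp z = rBell r m (z * Real.exp t) * Real.exp (z * (Real.exp t - 1) + r * t) := by
    rw [mul_sub, mul_one, Real.exp_add, Real.exp_sub]
    field_simp
  rw [hvalue] at h
  exact ⟨h.summable, h.tsum_eq⟩
end

section
/- Spivey-type recurrence for r-Bell polynomials: B_{n+m}(z;r) = Σ_{k=0}^{n} Σ_{j=0}^{m} {m+r brace j+r}_r · C(n,k) · j^{n−k} · z^j · B_k(z;r) for all nonnegative integers n, m, r, as a polynomial identity in z. -/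
open Finset

namespace SpiveyAux


noncomputable def PartCount (M r K : ℕ) : ℕ :=
  Nat.card {𝒜 : Finset (Finset (Fin M)) //
    IsSetPartition 𝒜 ∧ 𝒜.card = K ∧ DistinctBlocks 𝒜 {x | (x : ℕ) < r}}

lemma rStirling_eq_partCount (r n k : ℕ) : rStirling r n k = PartCount (n + r) r (k + r) := rfl

variable {M : ℕ}

def upF (s : Finset (Fin M)) : Finset (Fin (M + 1)) := s.map ⟨Fin.castSucc, Fin.castSucc_injective M⟩

noncomputable def downF (t : Finset (Fin (M + 1))) : Finset (Fin M) :=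
  t.preimage Fin.castSucc (Fin.castSucc_injective M).injOn

@[simp] lemma mem_downF {t : Finset (Fin (M + 1))} {x : Fin M} :
    x ∈ downF t ↔ x.castSucc ∈ t := Finset.mem_preimage

@[simp] lemma castSucc_mem_upF {s : Finset (Fin M)} {x : Fin M} :
    x.castSucc ∈ upF s ↔ x ∈ s := by
  simp [upF, Fin.castSucc_injective M |>.eq_iff]

lemma mem_upF {s : Finset (Fin M)} {x : Fin (M + 1)} :
    x ∈ upF s ↔ ∃ y ∈ s, y.castSucc = x := by simp [upF]

lemma last_not_mem_upF {s : Finset (Fin M)} : Fin.last M ∉ upF s := by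
  rw [mem_upF]
  rintro ⟨y, -, hy⟩
  exact absurd hy (Fin.castSucc_lt_last y).ne

lemma downF_upF (s : Finset (Fin M)) : downF (upF s) = s := by
  ext x; simp

lemma upF_downF (t : Finset (Fin (M + 1))) : upF (downF t) = t.erase (Fin.last M) := by
  ext x
  refine Fin.lastCases ?_ (fun y => ?_) x
  · simp [last_not_mem_upF]
  · simp [Finset.mem_erase, (Fin.castSucc_lt_last y).ne]

lemma upF_injective : Function.Injective (upF (M := M)) := Finset.map_injective _

lemma upF_nonempty {s : Finset (Fin M)} (h : s.Nonempty) : (upF s).Nonempty :=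
  Finset.Nonempty.map h

lemma block_eq {𝒜 : Finset (Finset (Fin M))} (h : IsSetPartition 𝒜)
    {t₁ t₂ : Finset (Fin M)} {x : Fin M} (h₁ : t₁ ∈ 𝒜) (h₂ : t₂ ∈ 𝒜)
    (hx₁ : x ∈ t₁) (hx₂ : x ∈ t₂) : t₁ = t₂ := by
  obtain ⟨t, -, ht⟩ := h.2 x
  rw [ht t₁ ⟨h₁, hx₁⟩, ht t₂ ⟨h₂, hx₂⟩]



lemma partCount_card_zero {r : ℕ} (hM : 1 ≤ M) : PartCount M r 0 = 0 := by
  rw [PartCount, Nat.card_eq_zero]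
  left
  constructor
  rintro ⟨𝒜, hpart, hcard, -⟩
  obtain ⟨t, ⟨ht, -⟩, -⟩ := hpart.2 ⟨0, hM⟩
  exact absurd hcard (by simp [Finset.card_eq_zero]; rintro rfl; simp at ht)

lemma partCount_lt_r {K r : ℕ} (hK : K < r) (hr : r ≤ M) : PartCount M r K = 0 := by
  rw [PartCount, Nat.card_eq_zero]
  left
  constructor
  rintro ⟨𝒜, hpart, hcard, hdist⟩
  classical
  set f : Fin M → Finset (Fin M) := fun x => Classical.choose (hpart.2 x) with hf
  have hfspec : ∀ x : Fin M, f x ∈ 𝒜 ∧ x ∈ f x := fun x =>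
    (Classical.choose_spec (hpart.2 x)).1
  set s : Finset (Fin M) := Finset.univ.map ⟨Fin.castLE hr, Fin.castLE_injective hr⟩ with hs
  have hsize : s.card = r := by simp [hs]
  have hmemlt : ∀ x ∈ s, (x : ℕ) < r := by
    intro x hx
    simp only [hs, Finset.mem_map, Finset.mem_univ, true_and] at hx
    obtain ⟨i, rfl⟩ := hx
    exact i.isLt
  have hle : s.card ≤ 𝒜.card := by
    apply Finset.card_le_card_of_injOn f (fun x _ => (hfspec x).1)
    intro x hx y hy hxy
    by_contra hne
    exact hdist x (hmemlt x hx) y (hmemlt y hy) hne (f x) (hfspec x).1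
      ⟨(hfspec x).2, hxy ▸ (hfspec y).2⟩
  omega

lemma partCount_gt {K r : ℕ} (h : M < K) : PartCount M r K = 0 := by
  rw [PartCount, Nat.card_eq_zero]
  left
  constructor
  rintro ⟨𝒜, hpart, hcard, -⟩
  classical
  have hdisj : ∀ t ∈ 𝒜, ∀ u ∈ 𝒜, t ≠ u → Disjoint t u := by
    intro t ht u hu htu
    rw [Finset.disjoint_left]
    intro x hxt hxu
    exact htu (block_eq hpart ht hu hxt hxu)
  have h1 : (𝒜.biUnion id).card = ∑ t ∈ 𝒜, t.card := Finset.card_biUnion hdisj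
  have h2 : (𝒜.biUnion id).card ≤ M := by
    simpa using Finset.card_le_card (Finset.subset_univ (𝒜.biUnion id))
  have h3 : 𝒜.card ≤ ∑ t ∈ 𝒜, t.card := by
    calc 𝒜.card = ∑ _t ∈ 𝒜, 1 := by simp
    _ ≤ ∑ t ∈ 𝒜, t.card := Finset.sum_le_sum fun t ht =>
        Finset.card_pos.2 (hpart.1 t ht)
  omega

lemma singleton_blocks {r : ℕ} {𝒜 : Finset (Finset (Fin r))}
    (hpart : IsSetPartition 𝒜) (hdist : DistinctBlocks 𝒜 {x | (x : ℕ) < r}) :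
    ∀ t ∈ 𝒜, ∃ x, t = {x} := by
  intro t ht
  obtain ⟨x, hx⟩ := hpart.1 t ht
  refine ⟨x, ?_⟩
  rw [Finset.eq_singleton_iff_unique_mem]
  refine ⟨hx, fun y hy => ?_⟩
  by_contra hne
  exact hdist y y.isLt x x.isLt hne t ht ⟨hy, hx⟩

lemma partCount_base (r : ℕ) : PartCount r r r = 1 := by
  classical
  rw [PartCount, Nat.card_eq_one_iff_unique]
  set 𝒜₀ : Finset (Finset (Fin r)) := Finset.univ.image (fun x : Fin r => ({x} : Finset (Fin r))) with h𝒜₀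
  have hprops : IsSetPartition 𝒜₀ ∧ 𝒜₀.card = r ∧ DistinctBlocks 𝒜₀ {x | (x : ℕ) < r} := by
    refine ⟨⟨?_, ?_⟩, ?_, ?_⟩
    · intro t ht
      simp only [h𝒜₀, Finset.mem_image] at ht
      obtain ⟨x, -, rfl⟩ := ht
      exact ⟨x, Finset.mem_singleton_self x⟩
    · intro x
      refine ⟨{x}, ⟨Finset.mem_image_of_mem _ (Finset.mem_univ x), Finset.mem_singleton_self x⟩, ?_⟩
      rintro t ⟨ht, hxt⟩
      simp only [h𝒜₀, Finset.mem_image] at ht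
      obtain ⟨y, -, rfl⟩ := ht
      rw [Finset.mem_singleton] at hxt
      rw [hxt]
    · rw [h𝒜₀, Finset.card_image_of_injective _ (fun a b hab => by
        simpa using hab)]
      simp
    · intro a _ b _ hab t ht
      simp only [h𝒜₀, Finset.mem_image] at ht
      obtain ⟨y, -, rfl⟩ := ht
      rintro ⟨ha, hb⟩
      rw [Finset.mem_singleton] at ha hb
      exact hab (ha.trans hb.symm)
  have huniq : ∀ 𝒜 : Finset (Finset (Fin r)),
      IsSetPartition 𝒜 → DistinctBlocks 𝒜 {x | (x : ℕ) < r} → 𝒜 = 𝒜₀ := by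
    intro 𝒜 hpart hdist
    ext t
    simp only [h𝒜₀, Finset.mem_image, Finset.mem_univ, true_and]
    constructor
    · intro ht
      obtain ⟨x, rfl⟩ := singleton_blocks hpart hdist t ht
      exact ⟨x, rfl⟩
    · rintro ⟨x, rfl⟩
      obtain ⟨b, ⟨hb, hxb⟩, -⟩ := hpart.2 x
      obtain ⟨y, rfl⟩ := singleton_blocks hpart hdist b hb
      rw [Finset.mem_singleton] at hxb
      rw [hxb]; exact hb
  refine ⟨⟨?_⟩, ⟨⟨𝒜₀, hprops⟩⟩⟩
  rintro ⟨𝒜, hp, -, hd⟩ ⟨ℬ, hp', -, hd'⟩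
  exact Subtype.ext ((huniq 𝒜 hp hd).trans (huniq ℬ hp' hd').symm)

section Lift
variable {r K : ℕ}

noncomputable def liftNone (𝒜 : Finset (Finset (Fin M))) : Finset (Finset (Fin (M + 1))) :=
  insert {Fin.last M} (𝒜.image upF)

noncomputable def liftSome (𝒜 : Finset (Finset (Fin M))) (t : Finset (Fin M)) :
    Finset (Finset (Fin (M + 1))) :=
  insert (insert (Fin.last M) (upF t)) ((𝒜.erase t).image upF)

lemma not_mem_image_of_last_mem {T : Finset (Fin (M + 1))} (h : Fin.last M ∈ T)
    (𝒜 : Finset (Finset (Fin M))) : T ∉ 𝒜.image upF := by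
  rw [Finset.mem_image]
  rintro ⟨s, -, rfl⟩
  exact last_not_mem_upF h

lemma dist_cast (hr : r ≤ M) {a : Fin (M + 1)} (ha : (a : ℕ) < r) :
    ∃ a₀ : Fin M, a₀.castSucc = a ∧ (a₀ : ℕ) < r := by
  have hne : a ≠ Fin.last M := by
    intro h
    rw [h] at ha
    simp only [Fin.val_last] at ha
    omega
  obtain ⟨a₀, h⟩ := Fin.exists_castSucc_eq.2 hne
  refine ⟨a₀, h, ?_⟩
  rw [← h] at ha
  simpa using ha

lemma liftNone_partition {𝒜 : Finset (Finset (Fin M))} (h : IsSetPartition 𝒜) :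
    IsSetPartition (liftNone 𝒜) := by
  constructor
  · intro t ht
    rcases Finset.mem_insert.1 ht with rfl | ht
    · exact ⟨_, Finset.mem_singleton_self _⟩
    · obtain ⟨s, hs, rfl⟩ := Finset.mem_image.1 ht
      exact upF_nonempty (h.1 s hs)
  · intro x
    refine Fin.lastCases ?_ (fun y => ?_) x
    · refine ⟨{Fin.last M}, ⟨Finset.mem_insert_self _ _, Finset.mem_singleton_self _⟩, ?_⟩
      rintro b ⟨hb, hlb⟩
      rcases Finset.mem_insert.1 hb with rfl | hb
      · rfl
      · obtain ⟨s, hs, rfl⟩ := Finset.mem_image.1 hb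
        exact absurd hlb last_not_mem_upF
    · obtain ⟨s, ⟨hs, hys⟩, hsu⟩ := h.2 y
      refine ⟨upF s, ⟨Finset.mem_insert_of_mem (Finset.mem_image_of_mem _ hs),
        castSucc_mem_upF.2 hys⟩, ?_⟩
      rintro b ⟨hb, hyb⟩
      rcases Finset.mem_insert.1 hb with rfl | hb
      · rw [Finset.mem_singleton] at hyb
        exact absurd hyb (Fin.castSucc_lt_last y).ne
      · obtain ⟨s', hs', rfl⟩ := Finset.mem_image.1 hb
        rw [castSucc_mem_upF] at hyb
        rw [hsu s' ⟨hs', hyb⟩]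

lemma liftNone_card {𝒜 : Finset (Finset (Fin M))} : (liftNone 𝒜).card = 𝒜.card + 1 := by
  rw [liftNone, Finset.card_insert_of_notMem
    (not_mem_image_of_last_mem (Finset.mem_singleton_self _) 𝒜),
    Finset.card_image_of_injective _ upF_injective]

lemma liftNone_distinct (hr : r ≤ M) {𝒜 : Finset (Finset (Fin M))}
    (hd : DistinctBlocks 𝒜 {x | (x : ℕ) < r}) :
    DistinctBlocks (liftNone 𝒜) {x | (x : ℕ) < r} := by
  intro a ha b hb hab t ht
  obtain ⟨a₀, rfl, ha₀⟩ := dist_cast hr ha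
  obtain ⟨b₀, rfl, hb₀⟩ := dist_cast hr hb
  rintro ⟨hat, hbt⟩
  rcases Finset.mem_insert.1 ht with rfl | ht
  · rw [Finset.mem_singleton] at hat
    exact (Fin.castSucc_lt_last a₀).ne hat
  · obtain ⟨s, hs, rfl⟩ := Finset.mem_image.1 ht
    rw [castSucc_mem_upF] at hat hbt
    exact hd a₀ ha₀ b₀ hb₀ (fun h => hab (by rw [h])) s hs ⟨hat, hbt⟩

lemma liftSome_partition {𝒜 : Finset (Finset (Fin M))} {t : Finset (Fin M)}
    (h : IsSetPartition 𝒜) (ht : t ∈ 𝒜) : IsSetPartition (liftSome 𝒜 t) := by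
  constructor
  · intro b hb
    rcases Finset.mem_insert.1 hb with rfl | hb
    · exact ⟨_, Finset.mem_insert_self _ _⟩
    · obtain ⟨s, hs, rfl⟩ := Finset.mem_image.1 hb
      exact upF_nonempty (h.1 s (Finset.mem_of_mem_erase hs))
  · intro x
    refine Fin.lastCases ?_ (fun y => ?_) x
    · refine ⟨insert (Fin.last M) (upF t), ⟨Finset.mem_insert_self _ _,
        Finset.mem_insert_self _ _⟩, ?_⟩
      rintro b ⟨hb, hlb⟩
      rcases Finset.mem_insert.1 hb with rfl | hb
      · rfl
      · obtain ⟨s, hs, rfl⟩ := Finset.mem_image.1 hb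
        exact absurd hlb last_not_mem_upF
    · obtain ⟨s, ⟨hs, hys⟩, hsu⟩ := h.2 y
      by_cases hst : s = t
      · refine ⟨insert (Fin.last M) (upF t), ⟨Finset.mem_insert_self _ _,
          Finset.mem_insert_of_mem (castSucc_mem_upF.2 (hst ▸ hys))⟩, ?_⟩
        rintro b ⟨hb, hyb⟩
        rcases Finset.mem_insert.1 hb with rfl | hb
        · rfl
        · obtain ⟨s', hs', rfl⟩ := Finset.mem_image.1 hb
          rw [castSucc_mem_upF] at hyb
          have h1 : s' = s := hsu s' ⟨Finset.mem_of_mem_erase hs', hyb⟩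
          exact absurd (h1.trans hst) (Finset.ne_of_mem_erase hs')
      · refine ⟨upF s, ⟨Finset.mem_insert_of_mem
          (Finset.mem_image_of_mem _ (Finset.mem_erase.2 ⟨hst, hs⟩)),
          castSucc_mem_upF.2 hys⟩, ?_⟩
        rintro b ⟨hb, hyb⟩
        rcases Finset.mem_insert.1 hb with rfl | hb
        · rcases Finset.mem_insert.1 hyb with h' | h'
          · exact absurd h' (Fin.castSucc_lt_last y).ne
          · rw [castSucc_mem_upF] at h'
            exact absurd (hsu t ⟨ht, h'⟩).symm hst
        · obtain ⟨s', hs', rfl⟩ := Finset.mem_image.1 hb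
          rw [castSucc_mem_upF] at hyb
          rw [hsu s' ⟨Finset.mem_of_mem_erase hs', hyb⟩]

lemma liftSome_card {𝒜 : Finset (Finset (Fin M))} {t : Finset (Fin M)} (ht : t ∈ 𝒜) :
    (liftSome 𝒜 t).card = 𝒜.card := by
  rw [liftSome, Finset.card_insert_of_notMem
    (not_mem_image_of_last_mem (Finset.mem_insert_self _ _) _),
    Finset.card_image_of_injective _ upF_injective, Finset.card_erase_of_mem ht]
  have : 1 ≤ 𝒜.card := Finset.card_pos.2 ⟨t, ht⟩
  omega

lemma liftSome_distinct (hr : r ≤ M) {𝒜 : Finset (Finset (Fin M))} {t : Finset (Fin M)}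
    (ht : t ∈ 𝒜) (hd : DistinctBlocks 𝒜 {x | (x : ℕ) < r}) :
    DistinctBlocks (liftSome 𝒜 t) {x | (x : ℕ) < r} := by
  intro a ha b hb hab c hc
  obtain ⟨a₀, rfl, ha₀⟩ := dist_cast hr ha
  obtain ⟨b₀, rfl, hb₀⟩ := dist_cast hr hb
  have hab₀ : a₀ ≠ b₀ := fun h => hab (by rw [h])
  rintro ⟨hac, hbc⟩
  rcases Finset.mem_insert.1 hc with rfl | hc
  · rcases Finset.mem_insert.1 hac with h' | h'
    · exact (Fin.castSucc_lt_last a₀).ne h'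
    · rcases Finset.mem_insert.1 hbc with h'' | h''
      · exact (Fin.castSucc_lt_last b₀).ne h''
      · rw [castSucc_mem_upF] at h' h''
        exact hd a₀ ha₀ b₀ hb₀ hab₀ t ht ⟨h', h''⟩
  · obtain ⟨s, hs, rfl⟩ := Finset.mem_image.1 hc
    rw [castSucc_mem_upF] at hac hbc
    exact hd a₀ ha₀ b₀ hb₀ hab₀ s (Finset.mem_of_mem_erase hs) ⟨hac, hbc⟩

lemma liftNone_inj {𝒜 ℬ : Finset (Finset (Fin M))} (h : liftNone 𝒜 = liftNone ℬ) : 𝒜 = ℬ := by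
  have h2 : (liftNone 𝒜).erase {Fin.last M} = (liftNone ℬ).erase {Fin.last M} := by rw [h]
  rw [liftNone, liftNone, Finset.erase_insert (not_mem_image_of_last_mem
    (Finset.mem_singleton_self _) _), Finset.erase_insert (not_mem_image_of_last_mem
    (Finset.mem_singleton_self _) _)] at h2
  exact Finset.image_injective upF_injective h2

lemma liftSome_ne_liftNone {𝒜 ℬ : Finset (Finset (Fin M))} {t : Finset (Fin M)}
    (htne : t.Nonempty) : liftSome 𝒜 t ≠ liftNone ℬ := by
  intro h
  have hmem : insert (Fin.last M) (upF t) ∈ liftNone ℬ := h ▸ Finset.mem_insert_self _ _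
  rcases Finset.mem_insert.1 hmem with heq | hmem
  · obtain ⟨y, hy⟩ := htne
    have h2 : y.castSucc ∈ ({Fin.last M} : Finset (Fin (M + 1))) :=
      heq ▸ Finset.mem_insert_of_mem (castSucc_mem_upF.2 hy)
    rw [Finset.mem_singleton] at h2
    exact (Fin.castSucc_lt_last y).ne h2
  · exact not_mem_image_of_last_mem (Finset.mem_insert_self _ _) _ hmem

lemma liftSome_inj {𝒜 ℬ : Finset (Finset (Fin M))} {t u : Finset (Fin M)}
    (ht : t ∈ 𝒜) (hu : u ∈ ℬ) (h : liftSome 𝒜 t = liftSome ℬ u) : 𝒜 = ℬ ∧ t = u := by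
  have h1 : insert (Fin.last M) (upF t) ∈ liftSome ℬ u := h ▸ Finset.mem_insert_self _ _
  have htu : t = u := by
    rcases Finset.mem_insert.1 h1 with heq | hmem
    · apply upF_injective
      have h2 : (insert (Fin.last M) (upF t)).erase (Fin.last M) =
          (insert (Fin.last M) (upF u)).erase (Fin.last M) := by rw [heq]
      rwa [Finset.erase_insert last_not_mem_upF, Finset.erase_insert last_not_mem_upF] at h2
    · exact absurd hmem (not_mem_image_of_last_mem (Finset.mem_insert_self _ _) _)
  subst htu
  refine ⟨?_, rfl⟩
  have h2 : (𝒜.erase t).image upF = (ℬ.erase t).image upF := by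
    calc (𝒜.erase t).image upF
        = (liftSome 𝒜 t).erase (insert (Fin.last M) (upF t)) :=
          (Finset.erase_insert (not_mem_image_of_last_mem (Finset.mem_insert_self _ _) _)).symm
      _ = (liftSome ℬ t).erase (insert (Fin.last M) (upF t)) := by rw [h]
      _ = (ℬ.erase t).image upF :=
          Finset.erase_insert (not_mem_image_of_last_mem (Finset.mem_insert_self _ _) _)
  have h3 : 𝒜.erase t = ℬ.erase t := Finset.image_injective upF_injective h2
  rw [← Finset.insert_erase ht, ← Finset.insert_erase hu, h3]

end Lift

lemma lift_surj {r K : ℕ} (hr : r ≤ M) {𝒜 : Finset (Finset (Fin (M + 1)))}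
    (hpart : IsSetPartition 𝒜) (hcard : 𝒜.card = K)
    (hdist : DistinctBlocks 𝒜 {x | (x : ℕ) < r}) :
    (∃ ℬ t, (IsSetPartition ℬ ∧ ℬ.card = K ∧ DistinctBlocks ℬ {x | (x : ℕ) < r}) ∧
      t ∈ ℬ ∧ liftSome ℬ t = 𝒜) ∨
    (∃ ℬ, (IsSetPartition ℬ ∧ ℬ.card = K - 1 ∧ DistinctBlocks ℬ {x | (x : ℕ) < r}) ∧
      liftNone ℬ = 𝒜) := by
  classical
  obtain ⟨T, ⟨hT, hlastT⟩, hTu⟩ := hpart.2 (Fin.last M)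
  have hnol : ∀ s ∈ 𝒜, s ≠ T → Fin.last M ∉ s := fun s hs hsT hl =>
    hsT (block_eq hpart hs hT hl hlastT)
  have hupdown : ∀ s ∈ 𝒜, s ≠ T → upF (downF s) = s := fun s hs hsT => by
    rw [upF_downF, Finset.erase_eq_of_notMem (hnol s hs hsT)]
  have hdownne : ∀ s ∈ 𝒜, s ≠ T → (downF s).Nonempty := by
    intro s hs hsT
    obtain ⟨x, hx⟩ := hpart.1 s hs
    have hxl : x ≠ Fin.last M := fun h => hnol s hs hsT (h ▸ hx)
    obtain ⟨y, rfl⟩ := Fin.exists_castSucc_eq.2 hxl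
    exact ⟨y, mem_downF.2 hx⟩
  have himgid : ((𝒜.erase T).image downF).image upF = 𝒜.erase T := by
    rw [Finset.image_image]
    rw [show (upF ∘ downF : Finset (Fin (M+1)) → Finset (Fin (M+1))) = fun s => upF (downF s) from rfl]
    rw [Finset.image_congr (g := id) (fun s hs =>
      hupdown s (Finset.mem_of_mem_erase hs) (Finset.ne_of_mem_erase hs))]
    exact Finset.image_id
  have hinjOn : Set.InjOn downF (𝒜.erase T : Set (Finset (Fin (M + 1)))) := by
    intro s hs s' hs' hss
    rw [Finset.mem_coe] at hs hs'
    have := congrArg upF hss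
    rwa [hupdown s (Finset.mem_of_mem_erase hs) (Finset.ne_of_mem_erase hs),
      hupdown s' (Finset.mem_of_mem_erase hs') (Finset.ne_of_mem_erase hs')] at this
  have hcardimg : ((𝒜.erase T).image downF).card = K - 1 := by
    rw [Finset.card_image_of_injOn hinjOn, Finset.card_erase_of_mem hT, hcard]
  have hdistimg : ∀ (ℬ : Finset (Finset (Fin M))),
      (∀ c ∈ ℬ, ∃ s ∈ 𝒜, c = downF s) → DistinctBlocks ℬ {x | (x : ℕ) < r} := by
    intro ℬ hmem a ha b hb hab c hc
    obtain ⟨s, hs, rfl⟩ := hmem c hc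
    rintro ⟨hac, hbc⟩
    have ha' : ((a.castSucc : Fin (M + 1)) : ℕ) < r := by simpa using ha
    have hb' : ((b.castSucc : Fin (M + 1)) : ℕ) < r := by simpa using hb
    exact hdist a.castSucc ha' b.castSucc hb' (fun h => hab (Fin.castSucc_injective M h))
      s hs ⟨mem_downF.1 hac, mem_downF.1 hbc⟩
  by_cases hTsing : T = {Fin.last M}
  · -- last is a singleton block
    right
    refine ⟨(𝒜.erase T).image downF, ⟨⟨?_, ?_⟩, hcardimg, hdistimg _ ?_⟩, ?_⟩
    · intro c hc
      obtain ⟨s, hs, rfl⟩ := Finset.mem_image.1 hc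
      exact hdownne s (Finset.mem_of_mem_erase hs) (Finset.ne_of_mem_erase hs)
    · intro y
      obtain ⟨s, ⟨hs, hys⟩, hsu⟩ := hpart.2 y.castSucc
      have hsT : s ≠ T := by
        intro h
        rw [h, hTsing, Finset.mem_singleton] at hys
        exact (Fin.castSucc_lt_last y).ne hys
      refine ⟨downF s, ⟨Finset.mem_image_of_mem _ (Finset.mem_erase.2 ⟨hsT, hs⟩),
        mem_downF.2 hys⟩, ?_⟩
      rintro c ⟨hc, hyc⟩
      obtain ⟨s', hs', rfl⟩ := Finset.mem_image.1 hc
      exact congrArg downF (hsu s' ⟨Finset.mem_of_mem_erase hs', mem_downF.1 hyc⟩)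
    · intro c hc
      obtain ⟨s, hs, rfl⟩ := Finset.mem_image.1 hc
      exact ⟨s, Finset.mem_of_mem_erase hs, rfl⟩
    · rw [liftNone, himgid, ← hTsing, Finset.insert_erase hT]
  · -- last's block has other elements
    left
    have hdTne : (downF T).Nonempty := by
      have : ∃ x ∈ T, x ≠ Fin.last M := by
        by_contra hcon
        push_neg at hcon
        apply hTsing
        apply Finset.eq_singleton_iff_unique_mem.2 ⟨hlastT, hcon⟩
      obtain ⟨x, hx, hxl⟩ := this
      obtain ⟨y, rfl⟩ := Fin.exists_castSucc_eq.2 hxl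
      exact ⟨y, mem_downF.2 hx⟩
    have hnotmem : downF T ∉ (𝒜.erase T).image downF := by
      rw [Finset.mem_image]
      rintro ⟨s, hs, heq⟩
      obtain ⟨y, hy⟩ := hdTne
      have hy' : y ∈ downF s := heq ▸ hy
      exact Finset.ne_of_mem_erase hs
        (block_eq hpart (Finset.mem_of_mem_erase hs) hT (mem_downF.1 hy') (mem_downF.1 hy))
    refine ⟨insert (downF T) ((𝒜.erase T).image downF), downF T,
      ⟨⟨?_, ?_⟩, ?_, hdistimg _ ?_⟩, Finset.mem_insert_self _ _, ?_⟩
    · intro c hc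
      rcases Finset.mem_insert.1 hc with rfl | hc
      · exact hdTne
      · obtain ⟨s, hs, rfl⟩ := Finset.mem_image.1 hc
        exact hdownne s (Finset.mem_of_mem_erase hs) (Finset.ne_of_mem_erase hs)
    · intro y
      obtain ⟨s, ⟨hs, hys⟩, hsu⟩ := hpart.2 y.castSucc
      refine ⟨downF s, ⟨?_, mem_downF.2 hys⟩, ?_⟩
      · by_cases hsT : s = T
        · rw [hsT]; exact Finset.mem_insert_self _ _
        · exact Finset.mem_insert_of_mem
            (Finset.mem_image_of_mem _ (Finset.mem_erase.2 ⟨hsT, hs⟩))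
      · rintro c ⟨hc, hyc⟩
        rcases Finset.mem_insert.1 hc with rfl | hc
        · exact congrArg downF (hsu T ⟨hT, mem_downF.1 hyc⟩)
        · obtain ⟨s', hs', rfl⟩ := Finset.mem_image.1 hc
          exact congrArg downF (hsu s' ⟨Finset.mem_of_mem_erase hs', mem_downF.1 hyc⟩)
    · rw [Finset.card_insert_of_notMem hnotmem, hcardimg]
      have : 1 ≤ K := hcard ▸ Finset.card_pos.2 ⟨T, hT⟩
      omega
    · intro c hc
      rcases Finset.mem_insert.1 hc with rfl | hc
      · exact ⟨T, hT, rfl⟩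
      · obtain ⟨s, hs, rfl⟩ := Finset.mem_image.1 hc
        exact ⟨s, Finset.mem_of_mem_erase hs, rfl⟩
    · rw [liftSome, Finset.erase_insert hnotmem, himgid, upF_downF,
        Finset.insert_erase hlastT, Finset.insert_erase hT]

lemma partCount_succ {M r K : ℕ} (hr : r ≤ M) (hK : 1 ≤ K) :
    PartCount (M + 1) r K = K * PartCount M r K + PartCount M r (K - 1) := by
  classical
  let α := {𝒜 : Finset (Finset (Fin (M + 1))) //
    IsSetPartition 𝒜 ∧ 𝒜.card = K ∧ DistinctBlocks 𝒜 {x | (x : ℕ) < r}}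
  let β := {𝒜 : Finset (Finset (Fin M)) //
    IsSetPartition 𝒜 ∧ 𝒜.card = K ∧ DistinctBlocks 𝒜 {x | (x : ℕ) < r}}
  let γ := {𝒜 : Finset (Finset (Fin M)) //
    IsSetPartition 𝒜 ∧ 𝒜.card = K - 1 ∧ DistinctBlocks 𝒜 {x | (x : ℕ) < r}}
  let G : (Σ b : β, {t // t ∈ b.val}) ⊕ γ → α := fun x =>
    Sum.rec
      (fun p => ⟨liftSome p.1.1 p.2.1, liftSome_partition p.1.2.1 p.2.2,
        by rw [liftSome_card p.2.2, p.1.2.2.1],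
        liftSome_distinct hr p.2.2 p.1.2.2.2⟩)
      (fun q => ⟨liftNone q.1, liftNone_partition q.2.1,
        by rw [liftNone_card, q.2.2.1]; omega,
        liftNone_distinct hr q.2.2.2⟩) x
  have hGinj : Function.Injective G := by
    rintro (⟨⟨B, hBp, hBc, hBd⟩, ⟨t, ht⟩⟩ | ⟨B, hBp, hBc, hBd⟩)
      (⟨⟨C, hCp, hCc, hCd⟩, ⟨u, hu⟩⟩ | ⟨C, hCp, hCc, hCd⟩) h
    · have hval : liftSome B t = liftSome C u := congrArg Subtype.val h
      obtain ⟨rfl, rfl⟩ := liftSome_inj ht hu hval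
      rfl
    · have hval : liftSome B t = liftNone C := congrArg Subtype.val h
      exact absurd hval (liftSome_ne_liftNone (hBp.1 t ht))
    · have hval : liftSome C u = liftNone B := (congrArg Subtype.val h).symm
      exact absurd hval (liftSome_ne_liftNone (hCp.1 u hu))
    · have hval : liftNone B = liftNone C := congrArg Subtype.val h
      obtain rfl := liftNone_inj hval
      rfl
  have hGsurj : Function.Surjective G := by
    rintro ⟨𝒜, hp, hc, hd⟩
    rcases lift_surj hr hp hc hd with ⟨B, t, hBprops, htB, hlift⟩ | ⟨B, hBprops, hlift⟩
    · exact ⟨Sum.inl ⟨⟨B, hBprops⟩, ⟨t, htB⟩⟩, Subtype.ext hlift⟩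
    · exact ⟨Sum.inr ⟨B, hBprops⟩, Subtype.ext hlift⟩
  haveI : Fintype α := Fintype.ofFinite _
  haveI : Fintype β := Fintype.ofFinite _
  haveI : Fintype γ := Fintype.ofFinite _
  have hcardα : PartCount (M + 1) r K = Fintype.card α := Nat.card_eq_fintype_card
  have hcardβ : PartCount M r K = Fintype.card β := Nat.card_eq_fintype_card
  have hcardγ : PartCount M r (K - 1) = Fintype.card γ := Nat.card_eq_fintype_card
  rw [hcardα, hcardβ, hcardγ]
  rw [Fintype.card_congr (Equiv.ofBijective G ⟨hGinj, hGsurj⟩).symm]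
  rw [Fintype.card_sum, Fintype.card_sigma]
  congr 1
  have : ∀ b : β, Fintype.card {t // t ∈ b.val} = K := by
    intro b
    rw [Fintype.card_coe, b.2.2.1]
  rw [Finset.sum_congr rfl (fun b _ => this b)]
  rw [Finset.sum_const, Finset.card_univ, smul_eq_mul, mul_comm]

lemma rStirling_zero_zero (r : ℕ) : rStirling r 0 0 = 1 := by
  rw [rStirling_eq_partCount]
  simpa using partCount_base r

lemma rStirling_gt {r n k : ℕ} (h : n < k) : rStirling r n k = 0 := by
  rw [rStirling_eq_partCount]
  exact partCount_gt (by omega)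

lemma rStirling_succ (r n k : ℕ) :
    rStirling r (n + 1) k =
      (k + r) * rStirling r n k + (if k = 0 then 0 else rStirling r n (k - 1)) := by
  rw [rStirling_eq_partCount, rStirling_eq_partCount (k := k)]
  have h1 : n + 1 + r = (n + r) + 1 := by omega
  rw [h1]
  rcases Nat.eq_zero_or_pos (k + r) with h | h
  · have hk : k = 0 := by omega
    have hr : r = 0 := by omega
    subst hk; subst hr
    simp [partCount_card_zero (Nat.le_add_left 1 n)]
  · rw [partCount_succ (by omega : r ≤ n + r) h]
    by_cases hk : k = 0
    · subst hk
      rw [if_pos rfl]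
      have h2 : 0 + r - 1 = r - 1 := by omega
      rw [h2, partCount_lt_r (show r - 1 < r by omega) (show r ≤ n + r by omega)]
    · rw [if_neg hk, rStirling_eq_partCount]
      have h2 : k + r - 1 = k - 1 + r := by omega
      rw [h2]

open Polynomial

noncomputable def PB (r n : ℕ) : ℝ[X] :=
  ∑ k ∈ range (n + 1), C (rStirling r n k : ℝ) * X ^ k

lemma rBell_eq (r n : ℕ) (z : ℝ) : rBell r n z = (PB r n).eval z := by
  simp [rBell, PB, eval_finset_sum]

lemma PB_zero (r : ℕ) : PB r 0 = 1 := by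
  simp [PB, rStirling_zero_zero]

lemma X_mul_C_mul_X_pred (j : ℕ) :
    (X : ℝ[X]) * (C (j : ℝ) * X ^ (j - 1)) = C (j : ℝ) * X ^ j := by
  cases j with
  | zero => simp
  | succ i =>
    rw [Nat.add_sub_cancel, pow_succ]
    ring

lemma PB_succ (r n : ℕ) :
    PB r (n + 1) = (C (r : ℝ) + X) * PB r n + X * derivative (PB r n) := by
  have hd : derivative (PB r n)
      = ∑ k ∈ range (n + 1), C (rStirling r n k : ℝ) * (C (k : ℝ) * X ^ (k - 1)) := by
    rw [PB, derivative_sum]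
    exact Finset.sum_congr rfl fun k _ => by rw [derivative_C_mul, derivative_X_pow]
  rw [hd, PB, PB, Finset.mul_sum, Finset.mul_sum, ← Finset.sum_add_distrib]
  have hterm : ∀ k, (C (r : ℝ) + X) * (C (rStirling r n k : ℝ) * X ^ k)
      + X * (C (rStirling r n k : ℝ) * (C (k : ℝ) * X ^ (k - 1)))
      = C (((k + r) * rStirling r n k : ℕ) : ℝ) * X ^ k
        + C (rStirling r n k : ℝ) * X ^ (k + 1) := by
    intro k
    have h1 : (X : ℝ[X]) * (C (rStirling r n k : ℝ) * (C (k : ℝ) * X ^ (k - 1)))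
        = C (rStirling r n k : ℝ) * (C (k : ℝ) * X ^ k) := by
      rw [← X_mul_C_mul_X_pred k]
      ring
    rw [h1]
    push_cast
    simp only [C_add, C_mul]
    ring
  rw [Finset.sum_congr rfl fun k _ => hterm k, Finset.sum_add_distrib]
  have hsplit : ∀ k, (C (rStirling r (n + 1) k : ℝ) : ℝ[X]) * X ^ k
      = C (((k + r) * rStirling r n k : ℕ) : ℝ) * X ^ k
        + C ((if k = 0 then 0 else rStirling r n (k - 1) : ℕ) : ℝ) * X ^ k := by
    intro k
    rw [rStirling_succ r n k]
    push_cast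
    simp only [C_add, C_mul]
    ring
  rw [Finset.sum_congr rfl fun k _ => hsplit k, Finset.sum_add_distrib]
  congr 1
  · rw [Finset.sum_range_succ, rStirling_gt (Nat.lt_succ_self n)]
    simp
  · rw [Finset.sum_range_succ' _ (n + 1)]
    simp

lemma Lop (r : ℕ) (c : ℝ) (j k : ℕ) :
    (C (r : ℝ) + X) * (C c * X ^ j * PB r k) + X * derivative (C c * X ^ j * PB r k)
    = C c * X ^ j * PB r (k + 1) + C (c * j) * X ^ j * PB r k := by
  rw [PB_succ r k]
  rw [derivative_mul, derivative_mul, derivative_C, derivative_X_pow]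
  have h2 : (X : ℝ[X]) * ((0 * X ^ j + C c * (C (j:ℝ) * X ^ (j - 1))) * PB r k
      + C c * X ^ j * derivative (PB r k))
      = C c * (C (j:ℝ) * X ^ j) * PB r k + C c * X ^ j * (X * derivative (PB r k)) := by
    rw [← X_mul_C_mul_X_pred j]
    ring
  rw [h2, C_mul]
  ring

lemma shift_sum (n j : ℕ) (c : ℝ) (Q : ℝ[X]) (P : ℕ → ℝ[X]) :
    ∑ k ∈ range (n + 1 + 1), C (c * ((n + 1).choose k : ℝ) * (j : ℝ) ^ (n + 1 - k)) * Q * P k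
    = ∑ k ∈ range (n + 1), (C (c * (n.choose k : ℝ) * (j : ℝ) ^ (n - k)) * Q * P (k + 1)
        + C (c * (n.choose k : ℝ) * (j : ℝ) ^ (n - k) * (j : ℝ)) * Q * P k) := by
  rw [Finset.sum_add_distrib, Finset.sum_range_succ' _ (n + 1)]
  have hf0 : C (c * ((n + 1).choose 0 : ℝ) * (j : ℝ) ^ (n + 1 - 0)) * Q * P 0
      = C (c * (n.choose 0 : ℝ) * (j : ℝ) ^ (n - 0) * (j : ℝ)) * Q * P 0 := by
    simp only [Nat.choose_zero_right, Nat.sub_zero, Nat.cast_one]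
    rw [pow_succ]
    ring
  have hfsucc : ∀ k ∈ range (n + 1),
      C (c * ((n + 1).choose (k + 1) : ℝ) * (j : ℝ) ^ (n + 1 - (k + 1))) * Q * P (k + 1)
      = C (c * (n.choose k : ℝ) * (j : ℝ) ^ (n - k)) * Q * P (k + 1)
        + C (c * (n.choose (k + 1) : ℝ) * (j : ℝ) ^ (n - k)) * Q * P (k + 1) := by
    intro k _
    have h3 : n + 1 - (k + 1) = n - k := by omega
    have h4 : ((n + 1).choose (k + 1) : ℝ) = (n.choose k : ℝ) + (n.choose (k + 1) : ℝ) := by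
      rw [Nat.choose_succ_succ]
      push_cast
      ring
    rw [h3, h4]
    simp only [mul_add, add_mul, C_add]
  rw [Finset.sum_congr rfl hfsucc, Finset.sum_add_distrib, hf0]
  have hS2 : ∑ k ∈ range (n + 1), C (c * (n.choose k : ℝ) * (j : ℝ) ^ (n - k) * (j : ℝ)) * Q * P k
      = (∑ k ∈ range n, C (c * (n.choose (k + 1) : ℝ) * (j : ℝ) ^ (n - (k + 1)) * (j : ℝ)) * Q * P (k + 1))
        + C (c * (n.choose 0 : ℝ) * (j : ℝ) ^ (n - 0) * (j : ℝ)) * Q * P 0 :=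
    Finset.sum_range_succ' _ n
  have hS2' : ∑ k ∈ range (n + 1), C (c * (n.choose (k + 1) : ℝ) * (j : ℝ) ^ (n - k)) * Q * P (k + 1)
      = ∑ k ∈ range n, C (c * (n.choose (k + 1) : ℝ) * (j : ℝ) ^ (n - k)) * Q * P (k + 1) := by
    rw [Finset.sum_range_succ, Nat.choose_succ_self]
    simp
  have hmatch : ∀ k ∈ range n,
      C (c * (n.choose (k + 1) : ℝ) * (j : ℝ) ^ (n - k)) * Q * P (k + 1)
      = C (c * (n.choose (k + 1) : ℝ) * (j : ℝ) ^ (n - (k + 1)) * (j : ℝ)) * Q * P (k + 1) := by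
    intro k hk
    rw [Finset.mem_range] at hk
    have h3 : n - k = (n - (k + 1)) + 1 := by omega
    rw [h3, pow_succ]
    ring
  rw [hS2, hS2', Finset.sum_congr rfl hmatch]
  ring

lemma PB_spivey (r n m : ℕ) :
    PB r (n + m) = ∑ k ∈ range (n + 1), ∑ j ∈ range (m + 1),
      C ((rStirling r m j : ℝ) * (n.choose k : ℝ) * (j : ℝ) ^ (n - k)) * X ^ j * PB r k := by
  induction n with
  | zero =>
    simp [PB, rStirling_zero_zero]
  | succ n ih =>
    have h1 : n + 1 + m = (n + m) + 1 := by omega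
    rw [h1, PB_succ, ih, derivative_sum]
    simp only [derivative_sum]
    rw [Finset.mul_sum, Finset.mul_sum, ← Finset.sum_add_distrib]
    have hstep : ∀ k ∈ range (n + 1),
        (C (r : ℝ) + X) * (∑ j ∈ range (m + 1),
            C ((rStirling r m j : ℝ) * (n.choose k : ℝ) * (j : ℝ) ^ (n - k)) * X ^ j * PB r k)
        + X * ∑ j ∈ range (m + 1), derivative
            (C ((rStirling r m j : ℝ) * (n.choose k : ℝ) * (j : ℝ) ^ (n - k)) * X ^ j * PB r k)
        = ∑ j ∈ range (m + 1),
            (C ((rStirling r m j : ℝ) * (n.choose k : ℝ) * (j : ℝ) ^ (n - k)) * X ^ j * PB r (k + 1)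
            + C ((rStirling r m j : ℝ) * (n.choose k : ℝ) * (j : ℝ) ^ (n - k) * (j : ℝ)) * X ^ j * PB r k) := by
      intro k _
      rw [Finset.mul_sum, Finset.mul_sum, ← Finset.sum_add_distrib]
      exact Finset.sum_congr rfl fun j _ => Lop r _ j k
    rw [Finset.sum_congr rfl hstep]
    refine Finset.sum_comm.trans (Eq.trans ?_ Finset.sum_comm)
    refine Finset.sum_congr rfl fun j _ => ?_
    exact (shift_sum n j (rStirling r m j : ℝ) (X ^ j) (PB r)).symm


end SpiveyAux

open SpiveyAux Polynomial in
/-- Spivey-type recurrence for $r$-Bell polynomials. -/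
theorem rBell_spivey (n m r : ℕ) (z : ℝ) :
    rBell r (n + m) z =
      ∑ k ∈ range (n + 1), ∑ j ∈ range (m + 1),
        (rStirling r m j : ℝ) * (n.choose k : ℝ) * (j : ℝ) ^ (n - k) * z ^ j * rBell r k z := by
  have h := congrArg (Polynomial.eval z) (PB_spivey r n m)
  simp only [Polynomial.eval_finset_sum, Polynomial.eval_mul, Polynomial.eval_pow,
    Polynomial.eval_C, Polynomial.eval_X] at h
  simpa only [rBell_eq] using h
end

section
/- Inverse expansion: for nonnegative integers n, m, r, z^n · B_m(z; r+n) = Σ_{j=0}^{n} s_r(n+r, j+r) · (−1)^{n−j} · B_{m+j}(z; r), where s_r(n+r, j+r) is the unsigned r-Stirling number of the first kind, as an identity of polynomials in z. -/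
open Finset

/-- The unsigned $r$-Stirling number of the first kind $s_r(n+r, k+r)$: the number of
permutations of $\{1,\dots,n+r\}$ with $k+r$ cycles (counting fixed points as cycles)
such that $1,\dots,r$ lie in distinct cycles. -/
noncomputable def rStirlingFirst (r n k : ℕ) : ℕ :=
  Nat.card {σ : Equiv.Perm (Fin (n + r)) //
    (Multiset.card σ.cycleType + (univ.filter fun x => σ x = x).card = k + r) ∧
    ∀ a b : Fin (n + r), (a : ℕ) < r → (b : ℕ) < r → a ≠ b → ¬σ.SameCycle a b}

/-!
Write `g n m = z ^ n * B_m(z; r + n)`. In a partition of `Fin (m + 1 + r)` separating the points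
`< r`, the point `r` either shares no block with them (then the partition separates the points
`< r + 1`), or lies in the block of one of those `r` points (then deleting it leaves a partition of
`m + r` points with as many blocks). Hence `B_{m+1}(z; r) = z B_m(z; r + 1) + r B_m(z; r)`, i.e.
`g (n + 1) = (E - (r + n)) (g n)` for the shift `E` of sequences in `m`, so
`g n = (E - r)(E - r - 1) ⋯ (E - r - n + 1) (g 0)`. Deleting the same point from a permutation
(it is a fixed point, or follows one of the other `n + r` points in its cycle) shows that the
coefficients of this polynomial are the signed `r`-Stirling numbers of the first kind.
-/

theorem Finset.card_image_eq_card_image_of_eq_iff {α β γ : Type*} [DecidableEq β]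
    [DecidableEq γ] {s : Finset α} {f : α → β} {g : α → γ}
    (h : ∀ x ∈ s, ∀ y ∈ s, f x = f y ↔ g x = g y) : #(s.image f) = #(s.image g) := by
  set P := s.image fun x => (f x, g x)
  have hf : s.image f = P.image Prod.fst := by rw [image_image]; rfl
  have hg : s.image g = P.image Prod.snd := by rw [image_image]; rfl
  have hfst : Set.InjOn Prod.fst (P : Set (β × γ)) := by
    simp only [Set.InjOn, P, coe_image, Set.mem_image, mem_coe]
    rintro _ ⟨x, hx, rfl⟩ _ ⟨y, hy, rfl⟩ hxy
    exact Prod.ext hxy ((h x hx y hy).1 hxy)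
  have hsnd : Set.InjOn Prod.snd (P : Set (β × γ)) := by
    simp only [Set.InjOn, P, coe_image, Set.mem_image, mem_coe]
    rintro _ ⟨x, hx, rfl⟩ _ ⟨y, hy, rfl⟩ hxy
    exact Prod.ext ((h x hx y hy).2 hxy) hxy
  rw [hf, hg, card_image_of_injOn hfst, card_image_of_injOn hsnd]

/-! ### Cycles of permutations -/

namespace Equiv.Perm

variable {α β : Type*}

theorem sameCycle_self_apply (σ : Perm α) (x : α) : σ.SameCycle x (σ x) := ⟨1, rfl⟩

theorem SameCycle.map [Finite α] {σ : Perm α} {τ : Perm β} {f : α → β}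
    (hf : ∀ x, τ.SameCycle (f x) (f (σ x))) {x y : α} (h : σ.SameCycle x y) :
    τ.SameCycle (f x) (f y) := by
  obtain ⟨n, rfl⟩ := h.exists_nat_pow_eq
  clear h
  induction n with
  | zero => exact SameCycle.refl _ _
  | succ n ih => rw [pow_succ', mul_apply]; exact ih.trans (hf _)

theorem sameCycle_permCongr [Finite α] [Finite β] (q : α ≃ β) (σ : Perm α) {x y : α} :
    (q.permCongr σ).SameCycle (q x) (q y) ↔ σ.SameCycle x y := by
  refine ⟨fun h => ?_, SameCycle.map fun x => by
    simpa using sameCycle_self_apply (q.permCongr σ) (q x)⟩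
  simpa using h.map (f := q.symm) fun u => by simpa using sameCycle_self_apply σ (q.symm u)

theorem sameCycle_optionCongr [Finite α] {e : Perm α} {x y : α} :
    SameCycle (optionCongr e) (some x) (some y) ↔ e.SameCycle x y := by
  refine ⟨fun h => ?_, SameCycle.map fun x => by
    simpa using sameCycle_self_apply (optionCongr e) (some x)⟩
  refine h.map (f := fun u => u.getD x) fun u => ?_
  cases u <;> simp [SameCycle.refl]

theorem sameCycle_swap_mul_optionCongr [Finite α] [DecidableEq α] {e : Perm α} {a x y : α} :
    (swap none (some a) * optionCongr e).SameCycle (some x) (some y) ↔ e.SameCycle x y := by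
  set τ := swap none (some a) * optionCongr e
  have hnone : τ none = some a := by simp [τ]
  have hsome (x : α) : τ (some x) = if e x = a then none else some (e x) := by
    by_cases h : e x = a <;> simp [τ, h, swap_apply_of_ne_of_ne]
  constructor
  · -- `τ` runs through the cycles of `e`, visiting `none` just before `a`
    refine fun h => h.map (f := fun u => u.getD a) fun u => ?_
    cases u with
    | none => simp [hnone, SameCycle.refl]
    | some u =>
      rw [hsome]
      split_ifs with h
      · exact h ▸ sameCycle_self_apply e u
      · exact sameCycle_self_apply e u
  · refine SameCycle.map fun x => ?_
    by_cases h : e x = a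
    · have := (sameCycle_self_apply τ (some x)).trans (sameCycle_self_apply τ _)
      simpa [hsome, h, hnone] using this
    · simpa [hsome, h] using sameCycle_self_apply τ (some x)

theorem pairwise_image_not_sameCycle_iff {f : α → β} (hf : Function.Injective f)
    {σ : Perm α} {τ : Perm β} (h : ∀ x y, τ.SameCycle (f x) (f y) ↔ σ.SameCycle x y)
    (S : Set α) :
    ((f '' S).Pairwise fun u v => ¬τ.SameCycle u v) ↔ S.Pairwise fun a b => ¬σ.SameCycle a b := by
  rw [hf.injOn.pairwise_image]
  simp only [Set.Pairwise, Function.onFun, h]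

variable [Fintype α] [DecidableEq α] [Fintype β] [DecidableEq β]

def cycleFinset (σ : Perm α) (x : α) : Finset α := {y | σ.SameCycle x y}

/-- The number of cycles of `σ`, fixed points counted as cycles of length one. -/
def numCycles (σ : Perm α) : ℕ := #(univ.image σ.cycleFinset)

theorem cycleFinset_eq_iff {σ : Perm α} {x y : α} :
    σ.cycleFinset x = σ.cycleFinset y ↔ σ.SameCycle x y := by
  simp only [cycleFinset, Finset.ext_iff, mem_filter, mem_univ, true_and]
  exact ⟨fun h => (h y).2 (SameCycle.refl _ _), fun h z => ⟨h.symm.trans, h.trans⟩⟩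

theorem numCycles_eq_card_image {γ : Type*} [DecidableEq γ] {σ : Perm α} (F : α → γ)
    (hF : ∀ x y, F x = F y ↔ σ.SameCycle x y) : σ.numCycles = #(univ.image F) :=
  card_image_eq_card_image_of_eq_iff fun x _ y _ => by rw [cycleFinset_eq_iff, hF]

theorem numCycles_le_card (σ : Perm α) : σ.numCycles ≤ Fintype.card α :=
  card_image_le

theorem ncard_le_numCycles {σ : Perm α} {S : Set α}
    (hS : S.Pairwise fun a b => ¬σ.SameCycle a b) : S.ncard ≤ σ.numCycles := by
  rw [numCycles, ← Set.ncard_coe_finset]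
  refine Set.ncard_le_ncard_of_injOn σ.cycleFinset (fun x _ => by simp) fun x hx y hy h => ?_
  by_contra hne
  exact hS hx hy hne (cycleFinset_eq_iff.1 h)

theorem numCycles_eq_card_iff {σ : Perm α} : σ.numCycles = Fintype.card α ↔ σ = 1 := by
  rw [numCycles, ← card_univ, card_image_iff]
  refine ⟨fun h => ext fun x => h (mem_univ _) (mem_univ x)
      (cycleFinset_eq_iff.2 (sameCycle_self_apply σ x).symm), ?_⟩
  rintro rfl x _ y _ h
  exact sameCycle_one.1 (cycleFinset_eq_iff.1 h)

theorem image_support_cycleOf (σ : Perm α) :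
    σ.support.image σ.cycleOf = σ.cycleFactorsFinset := by
  ext c
  simp only [mem_image]
  refine ⟨fun ⟨x, hx, hc⟩ => hc ▸ cycleOf_mem_cycleFactorsFinset_iff.2 hx, fun hc => ?_⟩
  obtain ⟨a, ha⟩ := (mem_cycleFactorsFinset_iff.1 hc).1.nonempty_support
  exact ⟨a, mem_cycleFactorsFinset_support_le hc ha, (cycle_is_cycleOf ha hc).symm⟩

theorem numCycles_eq_card_cycleType_add (σ : Perm α) :
    σ.numCycles = Multiset.card σ.cycleType + #{x | σ x = x} := by
  have hsupport : #(σ.support.image σ.cycleFinset) = Multiset.card σ.cycleType := by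
    rw [card_image_eq_card_image_of_eq_iff (g := σ.cycleOf), image_support_cycleOf,
      cycleType_def, Multiset.card_map, card_def]
    intro x hx y hy
    rw [cycleFinset_eq_iff, sameCycle_iff_cycleOf_eq_of_mem_support hx hy]
  have hfixed : #(({x | σ x = x} : Finset α).image σ.cycleFinset) = #{x | σ x = x} :=
    card_image_of_injOn fun x hx y _ h =>
      (cycleFinset_eq_iff.1 h).eq_of_left (mem_filter.1 hx).2
  have hdisj : _root_.Disjoint (σ.support.image σ.cycleFinset)
      (({x | σ x = x} : Finset α).image σ.cycleFinset) := by
    simp only [disjoint_left, mem_image, mem_support, mem_filter, mem_univ, true_and]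
    rintro _ ⟨x, hx, rfl⟩ ⟨y, hy, h⟩
    obtain rfl := (cycleFinset_eq_iff.1 h).eq_of_left hy
    exact hx hy
  rw [← hsupport, ← hfixed, ← card_union_of_disjoint hdisj, ← image_union, numCycles]
  congr 2
  ext x
  simp [em']

theorem numCycles_eq_of_sameCycle_iff {σ : Perm α} {τ : Perm β} (f : α → β)
    (hf : ∀ x y, τ.SameCycle (f x) (f y) ↔ σ.SameCycle x y)
    (hsurj : ∀ y, ∃ x, τ.SameCycle (f x) y) : τ.numCycles = σ.numCycles := by
  rw [numCycles_eq_card_image (τ.cycleFinset ∘ f) fun x y => by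
    rw [Function.comp_apply, Function.comp_apply, cycleFinset_eq_iff, hf], numCycles]
  congr 1
  ext t
  simp only [mem_image, mem_univ, true_and, Function.comp_apply]
  refine ⟨fun ⟨y, hy⟩ => ?_, fun ⟨x, hx⟩ => ⟨f x, hx⟩⟩
  obtain ⟨x, hx⟩ := hsurj y
  exact ⟨x, (cycleFinset_eq_iff.2 hx).trans hy⟩

theorem numCycles_permCongr (q : α ≃ β) (σ : Perm α) :
    (q.permCongr σ).numCycles = σ.numCycles :=
  numCycles_eq_of_sameCycle_iff q (fun _ _ => sameCycle_permCongr q σ)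
    fun y => ⟨q.symm y, by simpa using SameCycle.refl _ y⟩

theorem numCycles_swap_mul_optionCongr (e : Perm α) (a : α) :
    (swap none (some a) * optionCongr e).numCycles = e.numCycles :=
  numCycles_eq_of_sameCycle_iff some (fun _ _ => sameCycle_swap_mul_optionCongr) fun
    | none => ⟨a, by
        simpa using (sameCycle_self_apply (swap none (some a) * optionCongr e) none).symm⟩
    | some x => ⟨x, SameCycle.refl _ _⟩

theorem numCycles_optionCongr (e : Perm α) : numCycles (optionCongr e) = e.numCycles + 1 := by
  have hnone : cycleFinset (optionCongr e) none = {none} := by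
    ext u
    simp only [cycleFinset, mem_filter, mem_univ, true_and, mem_singleton]
    exact ⟨fun h => (h.eq_of_left (by simp [Function.IsFixedPt])).symm,
      fun h => h ▸ SameCycle.refl _ _⟩
  have himage : univ.image (cycleFinset (optionCongr e)) =
      insert {none} (univ.image (cycleFinset (optionCongr e) ∘ some)) := by
    ext t
    simp [Option.exists, hnone, eq_comm]
  rw [numCycles, himage, card_insert_of_notMem, ← numCycles_eq_card_image]
  · intro x y
    rw [Function.comp_apply, Function.comp_apply, cycleFinset_eq_iff, sameCycle_optionCongr]
  · simp only [mem_image, mem_univ, true_and, Function.comp_apply, ← hnone, cycleFinset_eq_iff]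
    rintro ⟨x, hx⟩
    have := hx.eq_of_right (by simp [Function.IsFixedPt])
    simp at this

abbrev SeparatingPerms (S : Set α) (K : ℕ) : Type _ :=
  {σ : Perm α // σ.numCycles = K ∧ S.Pairwise fun a b => ¬σ.SameCycle a b}

theorem card_separatingPerms_congr (q : α ≃ β) (S : Set α) (K : ℕ) :
    Nat.card (SeparatingPerms (q '' S) K) = Nat.card (SeparatingPerms S K) :=
  Nat.card_congr (q.permCongr.subtypeEquiv fun σ => by
    rw [numCycles_permCongr, pairwise_image_not_sameCycle_iff q.injective
      (fun _ _ => sameCycle_permCongr q σ)]).symm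

theorem card_separatingPerms_option (S : Set α) (K : ℕ) :
    Nat.card (SeparatingPerms (some '' S) K) =
      Nat.card {e : Perm α // e.numCycles + 1 = K ∧ S.Pairwise fun a b => ¬e.SameCycle a b} +
        Fintype.card α * Nat.card (SeparatingPerms S K) := by
  let P : Perm (Option α) → Prop := fun σ =>
    σ.numCycles = K ∧ (some '' S).Pairwise fun u v => ¬σ.SameCycle u v
  have hnone (e : Perm α) : decomposeOption.symm (none, e) = optionCongr e :=
    Equiv.ext fun u => by simp
  have hsome (a : α) (e : Perm α) :
      decomposeOption.symm (some a, e) = swap none (some a) * optionCongr e := rfl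
  calc Nat.card (SeparatingPerms (some '' S) K)
      = Nat.card (Σ p, {e : Perm α // P (decomposeOption.symm (p, e))}) :=
        Nat.card_congr <| (decomposeOption.subtypeEquiv fun σ => by simp [P]).trans
          (Equiv.subtypeProdEquivSigmaSubtype fun p e => P (decomposeOption.symm (p, e)))
    _ = _ := by
      rw [Nat.card_sigma, Fintype.sum_option]
      congr 1
      · refine Nat.card_congr (Equiv.subtypeEquivRight fun e => ?_)
        simp only [P]
        rw [hnone, numCycles_optionCongr, pairwise_image_not_sameCycle_iff
          (Option.some_injective α) fun _ _ => sameCycle_optionCongr]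
      · rw [← smul_eq_mul, ← card_univ, ← sum_const]
        refine sum_congr rfl fun a _ => Nat.card_congr (Equiv.subtypeEquivRight fun e => ?_)
        simp only [P]
        rw [hsome, numCycles_swap_mul_optionCongr, pairwise_image_not_sameCycle_iff
          (Option.some_injective α) fun _ _ => sameCycle_swap_mul_optionCongr]

end Equiv.Perm

/-! ### Set partitions -/

section Partitions

variable {α β : Type*}

-- `IsSetPartition` and `DistinctBlocks` over an arbitrary ground type
def IsFinsetPartition (𝒜 : Finset (Finset α)) : Prop :=
  (∀ t ∈ 𝒜, t.Nonempty) ∧ ∀ x : α, ∃! t, t ∈ 𝒜 ∧ x ∈ t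

def BlocksSeparate (𝒜 : Finset (Finset α)) (S : Set α) : Prop :=
  S.Pairwise fun a b => ∀ t ∈ 𝒜, ¬(a ∈ t ∧ b ∈ t)

theorem IsFinsetPartition.eq_of_mem {𝒜 : Finset (Finset α)} (h : IsFinsetPartition 𝒜)
    {t t' : Finset α} {x : α} (ht : t ∈ 𝒜) (ht' : t' ∈ 𝒜) (hx : x ∈ t) (hx' : x ∈ t') :
    t = t' :=
  (h.2 x).unique ⟨ht, hx⟩ ⟨ht', hx'⟩

theorem IsFinsetPartition.card_le [Fintype α] {𝒜 : Finset (Finset α)}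
    (h : IsFinsetPartition 𝒜) : #𝒜 ≤ Fintype.card α := by
  choose block hblock using fun x => (h.2 x).exists
  refine card_le_card_of_surjOn block fun t ht => ?_
  obtain ⟨x, hx⟩ := h.1 t ht
  exact ⟨x, mem_coe.2 (mem_univ x), h.eq_of_mem (hblock x).1 ht (hblock x).2 hx⟩

theorem IsFinsetPartition.ncard_le_card {𝒜 : Finset (Finset α)} (h : IsFinsetPartition 𝒜)
    {S : Set α} (hS : BlocksSeparate 𝒜 S) : S.ncard ≤ #𝒜 := by
  choose block hblock using fun x => (h.2 x).exists
  rw [← Set.ncard_coe_finset 𝒜]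
  refine Set.ncard_le_ncard_of_injOn block (fun x _ => (hblock x).1) fun a ha b hb hab => ?_
  by_contra hne
  exact hS ha hb hne _ (hblock a).1 ⟨(hblock a).2, hab ▸ (hblock b).2⟩

def comapBlock [Fintype α] [DecidableEq β] (f : α → β) (t : Finset β) : Finset α :=
  {x | f x ∈ t}

@[simp]
theorem mem_comapBlock [Fintype α] [DecidableEq β] {f : α → β} {t : Finset β} {x : α} :
    x ∈ comapBlock f t ↔ f x ∈ t := by
  simp [comapBlock]

open Classical in
noncomputable def separatingPartitions [Fintype α] (S : Set α) (K : ℕ) :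
    Finset (Finset (Finset α)) :=
  {𝒜 | IsFinsetPartition 𝒜 ∧ #𝒜 = K ∧ BlocksSeparate 𝒜 S}

theorem mem_separatingPartitions [Fintype α] {S : Set α} {K : ℕ} {𝒜 : Finset (Finset α)} :
    𝒜 ∈ separatingPartitions S K ↔ IsFinsetPartition 𝒜 ∧ #𝒜 = K ∧ BlocksSeparate 𝒜 S := by
  simp [separatingPartitions]

variable [Fintype α] [DecidableEq α] [DecidableEq β]

theorem IsFinsetPartition.image_comapBlock {𝒜 : Finset (Finset β)} (h : IsFinsetPartition 𝒜)
    {f : α → β} (hf : ∀ t ∈ 𝒜, ∃ x, f x ∈ t) : IsFinsetPartition (𝒜.image (comapBlock f)) := by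
  refine ⟨?_, fun x => ?_⟩
  · simp only [mem_image, forall_exists_index, and_imp, forall_apply_eq_imp_iff₂]
    exact fun t ht => (hf t ht).imp fun x hx => mem_comapBlock.2 hx
  · obtain ⟨t, ⟨ht, hxt⟩, -⟩ := h.2 (f x)
    refine ⟨comapBlock f t, ⟨mem_image_of_mem _ ht, mem_comapBlock.2 hxt⟩, ?_⟩
    rintro _ ⟨hmem, hx⟩
    obtain ⟨s, hs, rfl⟩ := mem_image.1 hmem
    rw [h.eq_of_mem hs ht (mem_comapBlock.1 hx) hxt]

theorem IsFinsetPartition.card_image_comapBlock {𝒜 : Finset (Finset β)}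
    (h : IsFinsetPartition 𝒜) {f : α → β} (hf : ∀ t ∈ 𝒜, ∃ x, f x ∈ t) :
    #(𝒜.image (comapBlock f)) = #𝒜 := by
  refine card_image_of_injOn fun t ht t' ht' htt' => ?_
  obtain ⟨x, hx⟩ := hf t ht
  have hx' : f x ∈ t' := mem_comapBlock.1 (htt' ▸ mem_comapBlock.2 hx)
  exact h.eq_of_mem ht ht' hx hx'

theorem blocksSeparate_image_comapBlock {𝒜 : Finset (Finset β)} {f : α → β} {T : Set α}
    (hf : T.InjOn f) :
    BlocksSeparate (𝒜.image (comapBlock f)) T ↔ BlocksSeparate 𝒜 (f '' T) := by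
  rw [BlocksSeparate, BlocksSeparate, hf.pairwise_image]
  simp [Set.Pairwise, Function.onFun]

theorem image_comapBlock_image_comapBlock [Fintype β] (𝒜 : Finset (Finset β)) {f : α → β}
    {g : β → α} (hfg : f ∘ g = id) : (𝒜.image (comapBlock f)).image (comapBlock g) = 𝒜 := by
  rw [image_image]
  conv_rhs => rw [← image_id (s := 𝒜)]
  refine image_congr fun t _ => ?_
  ext y
  rw [Function.comp_apply, id, mem_comapBlock, mem_comapBlock,
    show f (g y) = y from congrFun hfg y]

theorem image_comapBlock_mem_separatingPartitions [Fintype β] {𝒜 : Finset (Finset β)}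
    {f : α → β} {T : Set α} {K : ℕ} (hf : T.InjOn f) (hmeet : ∀ t ∈ 𝒜, ∃ x, f x ∈ t)
    (h𝒜 : 𝒜 ∈ separatingPartitions (f '' T) K) :
    𝒜.image (comapBlock f) ∈ separatingPartitions T K := by
  obtain ⟨hpart, hcard, hsep⟩ := mem_separatingPartitions.1 h𝒜
  exact mem_separatingPartitions.2 ⟨hpart.image_comapBlock hmeet,
    (hpart.card_image_comapBlock hmeet).trans hcard, (blocksSeparate_image_comapBlock hf).2 hsep⟩

theorem image_comapBlock_mem_separatingPartitions_of_surjective [Fintype β]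
    {𝒜 : Finset (Finset β)} {f : α → β} (hsurj : Function.Surjective f) {T : Set α} {K : ℕ}
    (hf : T.InjOn f) (h𝒜 : 𝒜 ∈ separatingPartitions (f '' T) K) :
    𝒜.image (comapBlock f) ∈ separatingPartitions T K :=
  image_comapBlock_mem_separatingPartitions hf (fun t ht => by
    obtain ⟨y, hy⟩ := (mem_separatingPartitions.1 h𝒜).1.1 t ht
    obtain ⟨x, rfl⟩ := hsurj y
    exact ⟨x, hy⟩) h𝒜

theorem card_separatingPartitions_congr [Fintype β] (q : α ≃ β) (S : Set α) (K : ℕ) :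
    #(separatingPartitions (q '' S) K) = #(separatingPartitions S K) := by
  refine card_nbij' (·.image (comapBlock q)) (·.image (comapBlock q.symm)) (fun 𝒜 h𝒜 => ?_)
    (fun 𝒞 h𝒞 => ?_) (fun 𝒜 _ => ?_) (fun 𝒞 _ => ?_)
  · exact image_comapBlock_mem_separatingPartitions_of_surjective q.surjective
      q.injective.injOn h𝒜
  · refine image_comapBlock_mem_separatingPartitions_of_surjective q.symm.surjective
      q.symm.injective.injOn ?_
    rwa [q.symm_image_image]
  · exact image_comapBlock_image_comapBlock 𝒜 (by ext; simp)
  · exact image_comapBlock_image_comapBlock 𝒞 (by ext; simp)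

open Classical in
theorem card_separatingPartitions_sameBlock_none (S : Set α) (K : ℕ) (b : α) :
    #{𝒟 ∈ separatingPartitions (some '' S) K | ∃ t ∈ 𝒟, none ∈ t ∧ some b ∈ t} =
      #(separatingPartitions S K) := by
  set π : Option α → α := fun o => o.getD b
  refine card_nbij' (·.image (comapBlock some)) (·.image (comapBlock π)) (fun 𝒟 h𝒟 => ?_)
    (fun 𝒞 h𝒞 => ?_) (fun 𝒟 h𝒟 => ?_) (fun 𝒞 _ => image_comapBlock_image_comapBlock 𝒞 rfl)
  · obtain ⟨h𝒟, t₀, ht₀, hnone, hb₀⟩ := mem_filter.1 h𝒟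
    refine image_comapBlock_mem_separatingPartitions (Option.some_injective α).injOn
      (fun t ht => ?_) h𝒟
    obtain ⟨o, ho⟩ := (mem_separatingPartitions.1 h𝒟).1.1 t ht
    cases o with
    | none => exact ⟨b, (mem_separatingPartitions.1 h𝒟).1.eq_of_mem ht₀ ht hnone ho ▸ hb₀⟩
    | some x => exact ⟨x, ho⟩
  · have hπ : π '' (some '' S) = S := by rw [Set.image_image]; simp [π]
    obtain ⟨t, ⟨ht, hbt⟩, -⟩ := (mem_separatingPartitions.1 h𝒞).1.2 b
    refine mem_filter.2 ⟨image_comapBlock_mem_separatingPartitions_of_surjective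
      (fun x => ⟨some x, rfl⟩) (fun x hx y hy h => ?_) (hπ.symm ▸ h𝒞),
      comapBlock π t, mem_image_of_mem _ ht, by simpa [π] using hbt, by simpa [π] using hbt⟩
    obtain ⟨x, -, rfl⟩ := hx
    obtain ⟨y, -, rfl⟩ := hy
    exact congrArg some h
  · obtain ⟨h𝒟, t₀, ht₀, hnone, hb₀⟩ := mem_filter.1 h𝒟
    have hpart := (mem_separatingPartitions.1 h𝒟).1
    dsimp only
    rw [image_image]
    conv_rhs => rw [← image_id (s := 𝒟)]
    refine image_congr fun t ht => ?_
    ext o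
    cases o with
    | none =>
      simp only [Function.comp_apply, mem_comapBlock, id, π, Option.getD_none]
      exact ⟨fun h => hpart.eq_of_mem ht₀ ht hb₀ h ▸ hnone,
        fun h => hpart.eq_of_mem ht₀ ht hnone h ▸ hb₀⟩
    | some x => simp [π]

open Classical in
theorem card_separatingPartitions_option (S : Set α) (K : ℕ) :
    #(separatingPartitions (some '' S) K) =
      #(separatingPartitions (insert none (some '' S)) K) +
        S.ncard * #(separatingPartitions S K) := by
  let C : Finset (Finset (Option α)) → Prop := fun 𝒟 =>
    ∃ b ∈ S, ∃ t ∈ 𝒟, none ∈ t ∧ some b ∈ t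
  rw [← card_filter_add_card_filter_not C (s := separatingPartitions (some '' S) K), add_comm]
  congr 1
  · congr 1
    ext 𝒟
    simp only [mem_filter, mem_separatingPartitions, BlocksSeparate, Set.pairwise_insert, C]
    grind
  · have hdisj : (S.toFinset : Set α).PairwiseDisjoint fun b =>
        {𝒟 ∈ separatingPartitions (some '' S) K | ∃ t ∈ 𝒟, none ∈ t ∧ some b ∈ t} := by
      intro b hb b' hb' hne
      simp only [Function.onFun, disjoint_left, mem_filter, not_and, not_exists]
      rintro 𝒟 ⟨h𝒟, t, ht, hnt, hbt⟩ - t' ht' hnt' hbt'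
      obtain ⟨hpart, -, hsep⟩ := mem_separatingPartitions.1 h𝒟
      exact hsep ⟨b, by simpa using hb, rfl⟩ ⟨b', by simpa using hb', rfl⟩ (by simpa using hne)
        t ht ⟨hbt, hpart.eq_of_mem ht' ht hnt' hnt ▸ hbt'⟩
    have hC : filter C (separatingPartitions (some '' S) K) = S.toFinset.biUnion fun b =>
        {𝒟 ∈ separatingPartitions (some '' S) K | ∃ t ∈ 𝒟, none ∈ t ∧ some b ∈ t} := by
      ext 𝒟
      simp only [mem_filter, mem_biUnion, Set.mem_toFinset, C]
      tauto
    rw [hC, card_biUnion hdisj,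
      sum_congr rfl fun b _ => card_separatingPartitions_sameBlock_none S K b, sum_const,
      smul_eq_mul, Set.ncard_eq_toFinset_card']

end Partitions

/-! ### Recurrences for the `r`-Stirling numbers -/

def removeEquiv (n r : ℕ) : Fin (n + 1 + r) ≃ Option (Fin (n + r)) :=
  (finCongr (by omega)).trans (finSuccEquiv' ⟨r, by omega⟩)

theorem val_removeEquiv_symm_none (n r : ℕ) : ((removeEquiv n r).symm none : ℕ) = r := by
  simp [removeEquiv]

theorem val_removeEquiv_symm_some {n r : ℕ} (y : Fin (n + r)) :
    ((removeEquiv n r).symm (some y) : ℕ) = if (y : ℕ) < r then (y : ℕ) else (y : ℕ) + 1 := by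
  simp [removeEquiv, Fin.succAbove, Fin.lt_def]
  split_ifs <;> simp

theorem removeEquiv_image_lt (n r : ℕ) :
    removeEquiv n r '' {x | (x : ℕ) < r} = some '' {y : Fin (n + r) | (y : ℕ) < r} := by
  ext u
  rw [Equiv.image_eq_preimage_symm]
  cases u with
  | none => simp [val_removeEquiv_symm_none]
  | some y => simp [val_removeEquiv_symm_some]; split_ifs <;> omega

theorem removeEquiv_symm_image_insert_none (n r : ℕ) :
    (removeEquiv n r).symm.trans (finCongr (by omega)) ''
        insert none (some '' {y : Fin (n + r) | (y : ℕ) < r}) =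
      {x : Fin (n + (r + 1)) | (x : ℕ) < r + 1} := by
  ext x
  rw [Equiv.image_eq_preimage_symm]
  obtain ⟨u, rfl⟩ :=
    ((removeEquiv n r).symm.trans (finCongr (by omega : n + 1 + r = n + (r + 1)))).surjective x
  cases u with
  | none => simp [val_removeEquiv_symm_none]
  | some y => simp [val_removeEquiv_symm_some]; split_ifs <;> omega

theorem ncard_setOf_val_lt {N r : ℕ} (h : r ≤ N) : {x : Fin N | (x : ℕ) < r}.ncard = r := by
  simpa [h] using
    (Set.ncard_coe_finset ({i : Fin N | (i : ℕ) < r} : Finset _)).trans Fin.card_filter_val_lt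

open Equiv Equiv.Perm

theorem rStirlingFirst_eq_card (r n k : ℕ) :
    rStirlingFirst r n k = Nat.card (SeparatingPerms {x : Fin (n + r) | (x : ℕ) < r} (k + r)) :=
  Nat.card_congr <| Equiv.subtypeEquivRight fun σ => by
    rw [numCycles_eq_card_cycleType_add]
    exact and_congr_right' ⟨fun h a ha b hb => h a b ha hb, fun h a b ha hb => h ha hb⟩

theorem card_separatingPerms_succ (r n K : ℕ) :
    Nat.card (SeparatingPerms {x : Fin (n + 1 + r) | (x : ℕ) < r} K) =
      Nat.card {e : Perm (Fin (n + r)) // e.numCycles + 1 = K ∧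
          {x : Fin (n + r) | (x : ℕ) < r}.Pairwise fun a b => ¬e.SameCycle a b} +
        (n + r) * Nat.card (SeparatingPerms {x : Fin (n + r) | (x : ℕ) < r} K) := by
  rw [← card_separatingPerms_congr (removeEquiv n r), removeEquiv_image_lt,
    card_separatingPerms_option, Fintype.card_fin]

theorem rStirlingFirst_succ_succ (r n k : ℕ) :
    rStirlingFirst r (n + 1) (k + 1) =
      rStirlingFirst r n k + (n + r) * rStirlingFirst r n (k + 1) := by
  rw [rStirlingFirst_eq_card, rStirlingFirst_eq_card, rStirlingFirst_eq_card,
    card_separatingPerms_succ]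
  congr 1
  exact Nat.card_congr (Equiv.subtypeEquivRight fun e => and_congr_left' (by omega))

theorem rStirlingFirst_succ_zero (r n : ℕ) :
    rStirlingFirst r (n + 1) 0 = (n + r) * rStirlingFirst r n 0 := by
  have : IsEmpty {e : Perm (Fin (n + r)) // e.numCycles + 1 = 0 + r ∧
      {x : Fin (n + r) | (x : ℕ) < r}.Pairwise fun a b => ¬e.SameCycle a b} := by
    refine ⟨fun ⟨e, he, hS⟩ => ?_⟩
    have := ncard_le_numCycles hS
    rw [ncard_setOf_val_lt (by omega)] at this
    omega
  rw [rStirlingFirst_eq_card, rStirlingFirst_eq_card, card_separatingPerms_succ,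
    Nat.card_of_isEmpty, zero_add]

theorem rStirlingFirst_zero_zero (r : ℕ) : rStirlingFirst r 0 0 = 1 := by
  have key (σ : Perm (Fin (0 + r))) : σ.numCycles = 0 + r ↔ σ = 1 := by
    rw [← numCycles_eq_card_iff, Fintype.card_fin]
  rw [rStirlingFirst_eq_card, Nat.card_eq_one_iff_unique]
  refine ⟨⟨fun σ τ => Subtype.ext ?_⟩,
    ⟨⟨1, (key 1).2 rfl, fun a _ b _ hab h => hab (sameCycle_one.1 h)⟩⟩⟩
  rw [(key _).1 σ.2.1, (key _).1 τ.2.1]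

theorem rStirlingFirst_eq_zero_of_lt {r n k : ℕ} (h : n < k) : rStirlingFirst r n k = 0 := by
  have : IsEmpty (SeparatingPerms {x : Fin (n + r) | (x : ℕ) < r} (k + r)) := by
    refine ⟨fun ⟨σ, hσ, _⟩ => ?_⟩
    have := numCycles_le_card σ
    rw [Fintype.card_fin] at this
    omega
  rw [rStirlingFirst_eq_card, Nat.card_of_isEmpty]

theorem rStirling_eq_card_s14 (r n k : ℕ) :
    rStirling r n k = #(separatingPartitions {x : Fin (n + r) | (x : ℕ) < r} (k + r)) := by
  classical
  rw [rStirling, Nat.card_eq_fintype_card, Fintype.card_subtype]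
  rfl

theorem card_separatingPartitions_succ (r m K : ℕ) :
    #(separatingPartitions {x : Fin (m + 1 + r) | (x : ℕ) < r} K) =
      #(separatingPartitions {x : Fin (m + (r + 1)) | (x : ℕ) < r + 1} K) +
        r * #(separatingPartitions {x : Fin (m + r) | (x : ℕ) < r} K) := by
  rw [← card_separatingPartitions_congr (removeEquiv m r), removeEquiv_image_lt,
    card_separatingPartitions_option, ncard_setOf_val_lt (by omega),
    ← removeEquiv_symm_image_insert_none, card_separatingPartitions_congr]

theorem rStirling_succ_succ (r m k : ℕ) :
    rStirling r (m + 1) (k + 1) = rStirling (r + 1) m k + r * rStirling r m (k + 1) := by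
  rw [rStirling_eq_card_s14, rStirling_eq_card_s14, rStirling_eq_card_s14, card_separatingPartitions_succ,
    show k + 1 + r = k + (r + 1) by omega]

theorem rStirling_succ_zero (r m : ℕ) : rStirling r (m + 1) 0 = r * rStirling r m 0 := by
  rw [rStirling_eq_card_s14, rStirling_eq_card_s14, card_separatingPartitions_succ, add_eq_right,
    card_eq_zero, eq_empty_iff_forall_notMem]
  intro 𝒜 h𝒜
  obtain ⟨hpart, hcard, hsep⟩ := mem_separatingPartitions.1 h𝒜
  have := hpart.ncard_le_card hsep
  rw [ncard_setOf_val_lt (by omega)] at this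
  omega

theorem rStirling_eq_zero_of_lt {r n k : ℕ} (h : n < k) : rStirling r n k = 0 := by
  rw [rStirling_eq_card_s14, card_eq_zero, eq_empty_iff_forall_notMem]
  intro 𝒜 h𝒜
  obtain ⟨hpart, hcard, -⟩ := mem_separatingPartitions.1 h𝒜
  have := hpart.card_le
  rw [Fintype.card_fin] at this
  omega

theorem rBell_succ (r m : ℕ) (z : ℝ) :
    rBell r (m + 1) z = z * rBell (r + 1) m z + r * rBell r m z := by
  have hext : rBell r m z = ∑ k ∈ range (m + 2), (rStirling r m k : ℝ) * z ^ k := by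
    rw [rBell, sum_range_succ _ (m + 1), rStirling_eq_zero_of_lt (Nat.lt_succ_self m)]
    simp
  rw [hext, rBell, rBell, sum_range_succ' _ (m + 1), sum_range_succ' _ (m + 1), mul_sum,
    mul_add, mul_sum, ← add_assoc, ← sum_add_distrib]
  simp only [rStirling_succ_succ, rStirling_succ_zero]
  push_cast
  congr 1
  · exact sum_congr rfl fun k _ => by ring
  · ring

/-! ### The shift operator -/

open Polynomial

/-- `(descPochhammer ℝ n).comp (X - r)`, the falling factorial of `X - r`. -/
noncomputable def rDescPochhammer (r n : ℕ) : ℝ[X] := ∏ i ∈ range n, (X - C ((r + i : ℕ) : ℝ))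

theorem natDegree_rDescPochhammer_le (r n : ℕ) : (rDescPochhammer r n).natDegree ≤ n :=
  (natDegree_prod_le _ _).trans <| (sum_le_sum fun _ _ => natDegree_X_sub_C_le _).trans (by simp)

theorem coeff_rDescPochhammer (r n j : ℕ) :
    (rDescPochhammer r n).coeff j = (-1) ^ (n + j) * rStirlingFirst r n j := by
  induction n generalizing j with
  | zero =>
    rcases j with _ | j
    · simp [rDescPochhammer, rStirlingFirst_zero_zero]
    · simp [rDescPochhammer, rStirlingFirst_eq_zero_of_lt (Nat.succ_pos j), coeff_one]
  | succ n ih =>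
    rw [rDescPochhammer, prod_range_succ, ← rDescPochhammer]
    rcases j with _ | j
    · rw [mul_coeff_zero, ih, rStirlingFirst_succ_zero]
      simp only [coeff_sub, coeff_X_zero, coeff_C_zero]
      push_cast; ring
    · rw [coeff_mul_X_sub_C, ih, ih, rStirlingFirst_succ_succ]
      push_cast; ring

noncomputable def shift (R : Type*) [CommSemiring R] : Module.End R (ℕ → R) :=
  LinearMap.funLeft R R Nat.succ

theorem shift_pow_apply {R : Type*} [CommSemiring R] (j : ℕ) (f : ℕ → R) (m : ℕ) :
    (shift R ^ j) f m = f (m + j) := by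
  induction j generalizing f with
  | zero => rfl
  | succ j ih => rw [pow_succ, Module.End.mul_apply, ih]; rfl

theorem aeval_shift_apply {R : Type*} [CommSemiring R] {p : R[X]} {N : ℕ}
    (hp : p.natDegree ≤ N) (f : ℕ → R) (m : ℕ) :
    aeval (shift R) p f m = ∑ j ∈ range (N + 1), p.coeff j * f (m + j) := by
  rw [aeval_eq_sum_range' (Nat.lt_succ_of_le hp)]
  simp [shift_pow_apply]

theorem pow_mul_rBell_eq_aeval_shift (r n : ℕ) (z : ℝ) :
    (fun m => z ^ n * rBell (r + n) m z) =
      aeval (shift ℝ) (rDescPochhammer r n) (rBell r · z) := by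
  induction n with
  | zero => simp [rDescPochhammer]
  | succ n ih =>
    rw [rDescPochhammer, prod_range_succ, mul_comm, ← rDescPochhammer, map_mul,
      Module.End.mul_apply, ← ih]
    ext m
    simp [shift, rBell_succ, ← add_assoc]
    ring

/-- $z^n B_m(z;r+n) = \sum_{j=0}^n s_r(n+r,j+r) (-1)^{n-j} B_{m+j}(z;r)$. -/
theorem rBell_inverse_expansion (n m r : ℕ) (z : ℝ) :
    z ^ n * rBell (r + n) m z =
      ∑ j ∈ range (n + 1),
        (rStirlingFirst r n j : ℝ) * (-1 : ℝ) ^ (n - j) * rBell r (m + j) z := by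
  rw [congrFun (pow_mul_rBell_eq_aeval_shift r n z) m,
    aeval_shift_apply (natDegree_rDescPochhammer_le r n)]
  refine sum_congr rfl fun j hj => ?_
  obtain ⟨i, rfl⟩ := Nat.exists_eq_add_of_le (Nat.le_of_lt_succ (mem_range.1 hj))
  rw [coeff_rDescPochhammer, Nat.add_sub_cancel_left, add_right_comm, pow_add,
    Even.neg_one_pow ⟨j, rfl⟩, one_mul]
  ring
end
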